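/- arXiv:2004.01557 — 5 statements merged into one kernel-verified Lean document; each statement's English description precedes it below -/
import Mathlib

section
/- Let G be a connected k-transmission regular graph on n vertices with distance signless Laplacian spectrum {2k = μ₁^Q, μ₂^Q, …, μₙ^Q}. Let G{K₁} be the cluster of G with a single rooted vertex, i.e., the graph obtained from G by attaching one pendant vertex to each vertex of G. Then the distance signless Laplacian spectrum of G{K₁} consists of: (a) the eigenvalues k + 2n − 2 + μᵢ^Q ± √((k − μᵢ^Q)² + (n − 2)²) for each distance signless Laplacian eigenvalue μᵢ^Q ≠ 2k of G; and (b) the two eigenvalues 3k + 3n − 2 ± √((k + n)² + (2n − 2)²). -/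
/-!
Write `J` for the all-ones matrix (`of 1`) and `n = |V|`. For a `k`-transmission regular `G`,
`Q = Q(G)` satisfies `QJ = JQ = 2kJ`, and `Q(G{K₁})` is the block matrix
`[[Q + (k+n), Q - k + J], [Q - k + J, Q + (k+3n-4) + 2J]]`. All blocks lie in the commutative
algebra generated by `Q` and `J`, so `det (x - Q(G{K₁})) = det (c - dQ - eJ)` with `c`
quadratic and `d`, `e` linear in `x` (the `Q²` terms cancel). Since `(c - dQ) J = (c - 2kd) J`,
the rank-one term `eJ` only changes the factor `c - 2kd` belonging to the eigenvalue `2k` into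
`c - 2kd - ne`; every other eigenvalue `μ` of `Q` contributes the quadratic `c - dμ`, whose
roots are the stated ones. Both steps hold only after multiplying by a determinant that may
vanish, so the identity is proved pointwise in `x` for the product with a fixed nonzero
polynomial, which is then cancelled.
-/

open Finset

/-- The distance matrix of a simple graph, with real entries. -/
noncomputable def distMatrix {V : Type*} [Fintype V] (G : SimpleGraph V) : Matrix V V ℝ :=
  Matrix.of fun u v => (G.dist u v : ℝ)

/-- The transmission of a vertex: the sum of distances to all other vertices. -/
noncomputable def transmission {V : Type*} [Fintype V] (G : SimpleGraph V) (u : V) : ℝ :=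
  ∑ v, (G.dist u v : ℝ)

/-- The second transmission degree of a vertex: `T_i = ∑_j d(v_i, v_j) Tr_j`. -/
noncomputable def secondTransmission {V : Type*} [Fintype V] (G : SimpleGraph V) (u : V) : ℝ :=
  ∑ v, (G.dist u v : ℝ) * transmission G v

/-- The distance Laplacian matrix `L(G) = Tr(G) - D(G)`. -/
noncomputable def distLaplacian {V : Type*} [Fintype V] [DecidableEq V] (G : SimpleGraph V) :
    Matrix V V ℝ :=
  Matrix.diagonal (transmission G) - distMatrix G

/-- The distance signless Laplacian matrix `Q(G) = Tr(G) + D(G)`. -/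
noncomputable def distSignlessLaplacian {V : Type*} [Fintype V] [DecidableEq V]
    (G : SimpleGraph V) : Matrix V V ℝ :=
  Matrix.diagonal (transmission G) + distMatrix G

/-- The generalized distance matrix `D_α(G) = α Tr(G) + (1 - α) D(G)`. -/
noncomputable def genDistMatrix {V : Type*} [Fintype V] [DecidableEq V] (a : ℝ)
    (G : SimpleGraph V) : Matrix V V ℝ :=
  a • Matrix.diagonal (transmission G) + (1 - a) • distMatrix G
/-- The cluster `G{K₁}`: attach one pendant vertex to each vertex of `G`.
The vertex `Sum.inr u` is the pendant vertex attached to `Sum.inl u`. -/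
def cluster1 {V : Type*} (G : SimpleGraph V) : SimpleGraph (V ⊕ V) where
  Adj x y :=
    match x, y with
    | Sum.inl u, Sum.inl v => G.Adj u v
    | Sum.inl u, Sum.inr v => u = v
    | Sum.inr u, Sum.inl v => u = v
    | Sum.inr _, Sum.inr _ => False
  symm := by
    constructor
    rintro (u | u) (v | v) h
    · exact G.adj_symm h
    · exact h.symm
    · exact h.symm
    · exact h.elim
  loopless := by
    constructor
    rintro (u | u) h
    · exact G.irrefl h
    · exact h


open Matrix Polynomial

section LinearAlgebra

variable {m : Type*} [Fintype m]

lemma mul_of_one_eq_smul {R : Type*} [Semiring R] {M : Matrix m m R} {r : R}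
    (h : ∀ i, ∑ j, M i j = r) : M * of 1 = r • of 1 := by
  ext i j
  simp [mul_apply, h]

lemma of_one_mul_eq_smul {R : Type*} [Semiring R] {M : Matrix m m R} {r : R}
    (h : ∀ j, ∑ i, M i j = r) : of 1 * M = r • of 1 := by
  ext i j
  simp [mul_apply, h]

lemma of_one_mul_of_one {R : Type*} [Semiring R] :
    (of 1 : Matrix m m R) * of 1 = (Fintype.card m : R) • of 1 := by
  ext i j
  simp [mul_apply]

variable [DecidableEq m]

lemma det_mul_det_fromBlocks_of_commute {R : Type*} [CommRing R] (A B C D : Matrix m m R)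
    (hAC : Commute A C) :
    A.det * (fromBlocks A B C D).det = A.det * (A * D - C * B).det := by
  have h : fromBlocks 1 0 (-C) A * fromBlocks A B C D = fromBlocks A B 0 (A * D - C * B) := by
    simp [fromBlocks_multiply, hAC.eq, sub_eq_neg_add]
  calc A.det * (fromBlocks A B C D).det
      = (fromBlocks 1 0 (-C) A * fromBlocks A B C D).det := by
        rw [det_mul, det_fromBlocks_zero₁₂, det_one, one_mul]
    _ = A.det * (A * D - C * B).det := by rw [h, det_fromBlocks_zero₂₁]

lemma charpoly_eq_prod_of_roots_eq {R : Type*} [CommRing R] [IsDomain R] {M : Matrix m m R}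
    {μ : m → R} (h : M.charpoly.roots = Finset.univ.val.map μ) :
    M.charpoly = ∏ i, (X - C (μ i)) := by
  have hcard : M.charpoly.roots.card = M.charpoly.natDegree := by
    rw [h, charpoly_natDegree_eq_dim]
    simp
  rw [← prod_multiset_X_sub_C_of_monic_of_roots_card_eq M.charpoly_monic hcard, h,
    Multiset.map_map]
  rfl

lemma det_one_sub_smul_of_one {R : Type*} [CommRing R] (t : R) :
    (1 - t • of 1 : Matrix m m R).det = 1 - Fintype.card m * t := by
  have h : (1 - t • of 1 : Matrix m m R) =
      1 + replicateCol Unit (fun _ : m => -t) * replicateRow Unit (fun _ : m => (1 : R)) := by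
    ext i j
    simp [sub_eq_add_neg, mul_apply]
  rw [h, det_one_add_replicateCol_mul_replicateRow]
  simp [dotProduct, sub_eq_add_neg]

variable {K : Type*} [Field K]

lemma det_smul_one_sub_smul_of_charpoly_eq {M : Matrix m m K} {μ : m → K}
    (hM : M.charpoly = ∏ i, (X - C (μ i))) (c d : K) :
    (c • 1 - d • M).det = ∏ i, (c - d * μ i) := by
  rcases eq_or_ne d 0 with rfl | hd
  · simp
  have h : c • (1 : Matrix m m K) - d • M = d • (scalar m (c / d) - M) := by
    rw [scalar_apply, ← smul_one_eq_diagonal, smul_sub, smul_smul, mul_div_cancel₀ c hd]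
  rw [h, det_smul, ← eval_charpoly, hM, eval_prod, ← Finset.card_univ, ← Finset.prod_const,
    ← Finset.prod_mul_distrib]
  refine Finset.prod_congr rfl fun i _ => ?_
  simp only [eval_sub, eval_X, eval_C]
  field_simp

/-- Matrix determinant lemma for the all-ones perturbation of a matrix with constant row
sums `g`, multiplied through by `g` so that it also holds when `g = 0`. -/
lemma det_sub_smul_of_one_mul {M : Matrix m m K} {g : K} (hM : M * of 1 = g • of 1) (e : K) :
    (M - e • of 1).det * g = M.det * (g - Fintype.card m * e) := by
  rcases eq_or_ne g 0 with rfl | hg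
  · cases isEmpty_or_nonempty m
    · simp
    have hdet : M.det = 0 := by
      refine exists_mulVec_eq_zero_iff.1 ⟨fun _ => 1, fun h => one_ne_zero (congrFun h
        (Classical.arbitrary m)), funext fun i => ?_⟩
      simpa [mulVec, dotProduct, mul_apply] using congrFun (congrFun hM i) i
    simp [hdet]
  have h : M - e • of 1 = M * (1 - (e / g) • of 1) := by
    rw [Matrix.mul_sub, Matrix.mul_one, Matrix.mul_smul, hM, smul_smul, div_mul_cancel₀ e hg]
  rw [h, det_mul, det_one_sub_smul_of_one]
  field_simp

end LinearAlgebra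

section BlockDeterminant

variable {m K : Type*} [Fintype m] [DecidableEq m] [Field K]

/-- Here `c = αβ - k²`, `d = α + β - 2k` and `g = c - 2kd`: the Schur complement of the block
matrix is `c - dQ - (2α - 2k + n) J`, and `g` is the row sum of `c - dQ`. -/
lemma det_mul_det_fromBlocks_of_mul_of_one_eq_smul {Q : Matrix m m K} {k : K}
    (hQJ : Q * of 1 = (2 * k) • of 1) (hJQ : of 1 * Q = (2 * k) • of 1) (α β : K) :
    (α • 1 - Q).det * (fromBlocks (α • 1 - Q) (k • 1 - Q - of 1) (k • 1 - Q - of 1)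
        (β • 1 - Q - 2 • of 1)).det * (α * β - k ^ 2 - 2 * k * (α + β - 2 * k)) =
      (α • 1 - Q).det * ((α * β - k ^ 2) • 1 - (α + β - 2 * k) • Q).det *
        (α * β - k ^ 2 - 2 * k * (α + β - 2 * k) -
          Fintype.card m * (2 * α - 2 * k + Fintype.card m)) := by
  have hJJ : (of 1 : Matrix m m K) * of 1 = (Fintype.card m : K) • of 1 := of_one_mul_of_one
  have hcomm : Commute (α • 1 - Q) (k • 1 - Q - of 1) := by
    simp only [Commute, SemiconjBy, Matrix.sub_mul, Matrix.mul_sub, Matrix.smul_mul,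
      Matrix.mul_smul, Matrix.one_mul, Matrix.mul_one, hQJ, hJQ]
    module
  have hschur :
      (α • 1 - Q) * (β • 1 - Q - 2 • of 1) - (k • 1 - Q - of 1) * (k • 1 - Q - of 1) =
        (α * β - k ^ 2) • 1 - (α + β - 2 * k) • Q -
          (2 * α - 2 * k + Fintype.card m) • of 1 := by
    simp only [Matrix.sub_mul, Matrix.mul_sub, Matrix.smul_mul, Matrix.mul_smul,
      Matrix.one_mul, Matrix.mul_one, hQJ, hJQ, hJJ]
    module
  have hrow : ((α * β - k ^ 2) • 1 - (α + β - 2 * k) • Q) * of 1 =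
      (α * β - k ^ 2 - 2 * k * (α + β - 2 * k)) • of 1 := by
    simp only [Matrix.sub_mul, Matrix.smul_mul, Matrix.one_mul, hQJ, smul_smul]
    module
  rw [det_mul_det_fromBlocks_of_commute _ _ _ _ hcomm, hschur, mul_assoc,
    det_sub_smul_of_one_mul hrow]
  ring

end BlockDeterminant


section Cluster

variable {V : Type*} (G : SimpleGraph V)

lemma exists_walk_length_le_of_cluster1_walk {x y : V ⊕ V} (w : (cluster1 G).Walk x y) :
    ∃ w' : G.Walk (Sum.elim id id x) (Sum.elim id id y), w'.length ≤ w.length := by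
  induction w with
  | nil => exact ⟨.nil, le_rfl⟩
  | @cons a b c h p ih =>
    obtain ⟨w', hw'⟩ := ih
    rcases a with u | u <;> rcases b with v | v
    · exact ⟨.cons h w', Nat.succ_le_succ hw'⟩
    · obtain rfl : u = v := h
      exact ⟨w', hw'.trans (Nat.le_succ _)⟩
    · obtain rfl : u = v := h
      exact ⟨w', hw'.trans (Nat.le_succ _)⟩
    · exact h.elim

variable {G}

lemma cluster1_connected (hconn : G.Connected) : (cluster1 G).Connected := by
  have : Nonempty V := hconn.nonempty
  have hinl (u v : V) : (cluster1 G).Reachable (.inl u) (.inl v) :=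
    (hconn.preconnected u v).map ⟨Sum.inl, fun h => h⟩
  have hinr (u : V) : (cluster1 G).Reachable (.inr u) (.inl u) :=
    SimpleGraph.Adj.reachable (show u = u from rfl)
  constructor
  rintro (u | u) (v | v)
  · exact hinl u v
  · exact (hinl u v).trans (hinr v).symm
  · exact (hinr u).trans (hinl u v)
  · exact ((hinr u).trans (hinl u v)).trans (hinr v).symm

lemma cluster1_dist_inl_inl (hconn : G.Connected) (u v : V) :
    (cluster1 G).dist (.inl u) (.inl v) = G.dist u v := by
  apply le_antisymm
  · obtain ⟨p, hp⟩ := hconn.exists_walk_length_eq_dist u v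
    calc (cluster1 G).dist (.inl u) (.inl v)
        ≤ (p.map (⟨Sum.inl, fun h => h⟩ : G →g cluster1 G)).length := SimpleGraph.dist_le _
      _ = G.dist u v := by rw [SimpleGraph.Walk.length_map, hp]
  · obtain ⟨q, hq⟩ := (cluster1_connected hconn).exists_walk_length_eq_dist (.inl u) (.inl v)
    obtain ⟨w, hw⟩ := exists_walk_length_le_of_cluster1_walk G q
    exact (SimpleGraph.dist_le w).trans (hw.trans hq.le)

/-- Every walk leaving a pendant vertex starts along its pendant edge. -/
lemma cluster1_dist_inr (hconn : G.Connected) (u : V) {x : V ⊕ V} (hx : x ≠ .inr u) :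
    (cluster1 G).dist (.inr u) x = (cluster1 G).dist (.inl u) x + 1 := by
  have hc := cluster1_connected hconn
  apply le_antisymm
  · calc (cluster1 G).dist (.inr u) x
        ≤ (cluster1 G).dist (.inr u) (.inl u) + (cluster1 G).dist (.inl u) x := hc.dist_triangle
      _ = (cluster1 G).dist (.inl u) x + 1 := by
          rw [SimpleGraph.dist_eq_one_iff_adj.2 (show u = u from rfl), add_comm]
  · obtain ⟨q, hq⟩ := hc.exists_walk_length_eq_dist (.inr u) x
    match q with
    | .nil => exact absurd rfl hx
    | .cons (v := b) h p =>
      match b, h with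
      | .inl w, (h : u = w) =>
        subst h
        have : (cluster1 G).dist (.inl u) x ≤ p.length := SimpleGraph.dist_le _
        have hq' : p.length + 1 = (cluster1 G).dist (.inr u) x := hq
        omega

lemma cluster1_dist_inr_inl (hconn : G.Connected) (u v : V) :
    (cluster1 G).dist (.inr u) (.inl v) = G.dist u v + 1 := by
  rw [cluster1_dist_inr hconn u Sum.inl_ne_inr, cluster1_dist_inl_inl hconn]

lemma cluster1_dist_inl_inr (hconn : G.Connected) (u v : V) :
    (cluster1 G).dist (.inl u) (.inr v) = G.dist u v + 1 := by
  rw [SimpleGraph.dist_comm, cluster1_dist_inr_inl hconn, SimpleGraph.dist_comm]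

lemma cluster1_dist_inr_inr (hconn : G.Connected) {u v : V} (huv : u ≠ v) :
    (cluster1 G).dist (.inr u) (.inr v) = G.dist u v + 2 := by
  rw [cluster1_dist_inr hconn u (by simpa using huv.symm), cluster1_dist_inl_inr hconn]

variable [Fintype V]

lemma transmission_cluster1_inl (hconn : G.Connected) (u : V) :
    transmission (cluster1 G) (.inl u) = 2 * transmission G u + Fintype.card V := by
  simp only [transmission, Fintype.sum_sum_type, cluster1_dist_inl_inl hconn,
    cluster1_dist_inl_inr hconn, Nat.cast_add, Nat.cast_one, Finset.sum_add_distrib,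
    Finset.sum_const, Finset.card_univ, nsmul_eq_mul, mul_one]
  ring

lemma transmission_cluster1_inr [DecidableEq V] (hconn : G.Connected) (u : V) :
    transmission (cluster1 G) (.inr u) = 2 * transmission G u + 3 * Fintype.card V - 2 := by
  have hinr :
      ∑ v, ((cluster1 G).dist (.inr u) (.inr v) : ℝ) = ∑ v, ((G.dist u v : ℝ) + 2) - 2 := by
    rw [← Finset.add_sum_erase _ _ (Finset.mem_univ u),
      ← Finset.add_sum_erase _ _ (Finset.mem_univ u), Finset.sum_congr rfl fun v hv => by
        rw [cluster1_dist_inr_inr hconn (Finset.ne_of_mem_erase hv).symm]]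
    simp
  simp only [transmission, Fintype.sum_sum_type, hinr, cluster1_dist_inr_inl hconn,
    Nat.cast_add, Nat.cast_one, Finset.sum_add_distrib, Finset.sum_const, Finset.card_univ,
    nsmul_eq_mul, mul_one]
  ring

end Cluster

section ClusterMatrix

variable {V : Type*} [Fintype V] [DecidableEq V] {G : SimpleGraph V}

lemma distSignlessLaplacian_cluster1 (hconn : G.Connected) :
    distSignlessLaplacian (cluster1 G) = fromBlocks
      (diagonal (fun u => 2 * transmission G u + Fintype.card V) + distMatrix G)
      (distMatrix G + of 1) (distMatrix G + of 1)
      (diagonal (fun u => 2 * transmission G u + 3 * Fintype.card V - 4) + distMatrix G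
        + 2 • of 1) := by
  ext (u | u) (v | v)
  · by_cases huv : u = v
    · subst huv
      simp [distSignlessLaplacian, distMatrix, transmission_cluster1_inl hconn]
    · simp [distSignlessLaplacian, distMatrix, huv, cluster1_dist_inl_inl hconn]
  · simp [distSignlessLaplacian, distMatrix, cluster1_dist_inl_inr hconn]
  · simp [distSignlessLaplacian, distMatrix, cluster1_dist_inr_inl hconn]
  · by_cases huv : u = v
    · subst huv
      simp [distSignlessLaplacian, distMatrix, transmission_cluster1_inr hconn]
      ring
    · simp [distSignlessLaplacian, distMatrix, huv, cluster1_dist_inr_inr hconn huv]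

lemma sum_distSignlessLaplacian_apply (u : V) :
    ∑ v, distSignlessLaplacian G u v = 2 * transmission G u := by
  simp [distSignlessLaplacian, distMatrix, transmission, Finset.sum_add_distrib, two_mul,
    diagonal_apply]

lemma sum_distSignlessLaplacian_apply_left (v : V) :
    ∑ u, distSignlessLaplacian G u v = 2 * transmission G v := by
  simp [distSignlessLaplacian, distMatrix, transmission, Finset.sum_add_distrib, two_mul,
    diagonal_apply, SimpleGraph.dist_comm (v := v)]

lemma eval_charpoly_distSignlessLaplacian_cluster1 (hconn : G.Connected) {k : ℝ}
    (hreg : ∀ u, transmission G u = k) (x : ℝ) :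
    (distSignlessLaplacian (cluster1 G)).charpoly.eval x =
      (fromBlocks ((x - k - Fintype.card V) • 1 - distSignlessLaplacian G)
        (k • 1 - distSignlessLaplacian G - of 1) (k • 1 - distSignlessLaplacian G - of 1)
        ((x - k - 3 * Fintype.card V + 4) • 1 - distSignlessLaplacian G - 2 • of 1)).det := by
  rw [eval_charpoly, distSignlessLaplacian_cluster1 hconn]
  congr 1
  ext (u | u) (v | v) <;> by_cases huv : u = v <;>
    simp [distSignlessLaplacian, hreg, huv, one_apply] <;> ring

end ClusterMatrix

lemma quadratic_eq_mul_sub_sqrt (k n m x : ℝ) :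
    (x - k - n) * (x - k - 3 * n + 4) - k ^ 2 - ((x - k - n) + (x - k - 3 * n + 4) - 2 * k) * m =
      (x - (k + 2 * n - 2 + m + √((k - m) ^ 2 + (n - 2) ^ 2))) *
        (x - (k + 2 * n - 2 + m - √((k - m) ^ 2 + (n - 2) ^ 2))) := by
  linear_combination Real.sq_sqrt (by positivity : 0 ≤ (k - m) ^ 2 + (n - 2) ^ 2)

lemma quadratic_sub_eq_mul_sub_sqrt (k n x : ℝ) :
    (x - k - n) * (x - k - 3 * n + 4) - k ^ 2 - 2 * k * ((x - k - n) + (x - k - 3 * n + 4) - 2 * k)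
        - n * (2 * (x - k - n) - 2 * k + n) =
      (x - (3 * k + 3 * n - 2 + √((k + n) ^ 2 + (2 * n - 2) ^ 2))) *
        (x - (3 * k + 3 * n - 2 - √((k + n) ^ 2 + (2 * n - 2) ^ 2))) := by
  linear_combination Real.sq_sqrt (by positivity : 0 ≤ (k + n) ^ 2 + (2 * n - 2) ^ 2)

theorem stmt1_general {V : Type*} [Fintype V] [DecidableEq V] (G : SimpleGraph V)
    (hconn : G.Connected) (n : ℕ) (hn : Fintype.card V = n) (k : ℝ)
    (hreg : ∀ u, transmission G u = k)
    (μ : V → ℝ)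
    (hspec : (distSignlessLaplacian G).charpoly.roots = Finset.univ.val.map μ)
    (v₀ : V) (hv₀ : μ v₀ = 2 * k) :
    (distSignlessLaplacian (cluster1 G)).charpoly.roots =
      ((Finset.univ.erase v₀).val.bind fun v =>
        ({k + 2 * (n : ℝ) - 2 + μ v + Real.sqrt ((k - μ v) ^ 2 + ((n : ℝ) - 2) ^ 2),
          k + 2 * (n : ℝ) - 2 + μ v - Real.sqrt ((k - μ v) ^ 2 + ((n : ℝ) - 2) ^ 2)} :
            Multiset ℝ))
      + {3 * k + 3 * (n : ℝ) - 2 +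
           Real.sqrt ((k + (n : ℝ)) ^ 2 + (2 * (n : ℝ) - 2) ^ 2),
         3 * k + 3 * (n : ℝ) - 2 -
           Real.sqrt ((k + (n : ℝ)) ^ 2 + (2 * (n : ℝ) - 2) ^ 2)} := by
  subst hn
  set N : ℝ := (Fintype.card V : ℝ)
  set Q := distSignlessLaplacian G
  have hQ := charpoly_eq_prod_of_roots_eq hspec
  have hQJ : Q * of 1 = (2 * k) • of 1 :=
    mul_of_one_eq_smul fun u => by rw [sum_distSignlessLaplacian_apply, hreg]
  have hJQ : of 1 * Q = (2 * k) • of 1 :=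
    of_one_mul_eq_smul fun v => by rw [sum_distSignlessLaplacian_apply_left, hreg]
  set q : ℝ → ℝ[X] := fun m => (X - C (k + 2 * N - 2 + m + √((k - m) ^ 2 + (N - 2) ^ 2))) *
    (X - C (k + 2 * N - 2 + m - √((k - m) ^ 2 + (N - 2) ^ 2)))
  set P : ℝ[X] := (∏ v, (X - C (k + N + μ v))) * q (μ v₀)
  have hP : P ≠ 0 := ((monic_prod_of_monic _ _ fun v _ => monic_X_sub_C _).mul
    ((monic_X_sub_C _).mul (monic_X_sub_C _))).ne_zero
  rw [← roots_multiset_prod_X_sub_C (_ + _)]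
  congr 1
  refine mul_left_cancel₀ hP (Polynomial.funext fun x => ?_)
  have key := det_mul_det_fromBlocks_of_mul_of_one_eq_smul hQJ hJQ (x - k - N) (x - k - 3 * N + 4)
  rw [← eval_charpoly_distSignlessLaplacian_cluster1 hconn hreg,
    det_smul_one_sub_smul_of_charpoly_eq hQ, ← Finset.mul_prod_erase _ _ (mem_univ v₀),
    hv₀] at key
  have hA : eval x (∏ v, (X - C (k + N + μ v))) = ((x - k - N) • 1 - Q).det := by
    rw [← one_smul ℝ Q, det_smul_one_sub_smul_of_charpoly_eq hQ, eval_prod]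
    exact Finset.prod_congr rfl fun v _ => by simp only [eval_sub, eval_X, eval_C]; ring
  simp only [Multiset.map_add, Multiset.prod_add, Multiset.map_bind, Multiset.prod_bind,
    Multiset.insert_eq_cons, Multiset.map_cons, Multiset.prod_cons, Multiset.map_singleton,
    Multiset.prod_singleton, ← Finset.prod_eq_multiset_prod, P, eval_mul, hA]
  simp only [q, eval_prod, eval_mul, eval_sub, eval_X, eval_C, ← quadratic_eq_mul_sub_sqrt,
    ← quadratic_sub_eq_mul_sub_sqrt, hv₀]
  linear_combination key

theorem stmt1 {V : Type*} [Fintype V] [DecidableEq V] (G : SimpleGraph V)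
    (hconn : G.Connected) (n : ℕ) (hn : Fintype.card V = n) (k : ℝ)
    (hreg : ∀ u, transmission G u = k)
    (μ : V → ℝ)
    (hspec : (distSignlessLaplacian G).charpoly.roots = Finset.univ.val.map μ)
    (v₀ : V) (hv₀ : μ v₀ = 2 * k) (hne : ∀ v, v ≠ v₀ → μ v ≠ 2 * k) :
    (distSignlessLaplacian (cluster1 G)).charpoly.roots =
      ((Finset.univ.erase v₀).val.bind fun v =>
        ({k + 2 * (n : ℝ) - 2 + μ v + Real.sqrt ((k - μ v) ^ 2 + ((n : ℝ) - 2) ^ 2),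
          k + 2 * (n : ℝ) - 2 + μ v - Real.sqrt ((k - μ v) ^ 2 + ((n : ℝ) - 2) ^ 2)} :
            Multiset ℝ))
      + {3 * k + 3 * (n : ℝ) - 2 +
           Real.sqrt ((k + (n : ℝ)) ^ 2 + (2 * (n : ℝ) - 2) ^ 2),
         3 * k + 3 * (n : ℝ) - 2 -
           Real.sqrt ((k + (n : ℝ)) ^ 2 + (2 * (n : ℝ) - 2) ^ 2)} :=
  stmt1_general G hconn n hn k hreg μ hspec v₀ hv₀
end

section
/- For i = 1, 2, let Gᵢ be an rᵢ-regular graph on nᵢ vertices with adjacency spectrum {r₁ = λ₁, λ₂, …, λ_{n₁}} for G₁ and {r₂ = μ₁, μ₂, …, μ_{n₂}} for G₂. Then the distance Laplacian spectrum of the join G₁∇G₂ consists of the eigenvalues 0, n₁ + n₂, the eigenvalues 2n₁ + n₂ − r₁ + λⱼ for j = 2, 3, …, n₁, and the eigenvalues 2n₂ + n₁ − r₂ + μⱼ for j = 2, 3, …, n₂. -/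
open Finset

/-- The join `G₁ ∇ G₂`: disjoint union of `G₁` and `G₂` together with all edges
between the two parts. -/
def joinGraph {V₁ V₂ : Type*} (G₁ : SimpleGraph V₁) (G₂ : SimpleGraph V₂) :
    SimpleGraph (V₁ ⊕ V₂) where
  Adj x y :=
    match x, y with
    | Sum.inl u, Sum.inl v => G₁.Adj u v
    | Sum.inr u, Sum.inr v => G₂.Adj u v
    | Sum.inl _, Sum.inr _ => True
    | Sum.inr _, Sum.inl _ => True
  symm := by
    constructor
    rintro (u | u) (v | v) h
    · exact G₁.adj_symm h
    · exact h
    · exact h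
    · exact G₂.adj_symm h
  loopless := by
    constructor
    rintro (u | u) h
    · exact G₁.irrefl h
    · exact G₂.irrefl h

/-!
In `G₁ ∇ G₂` two distinct vertices of the same part are at distance 1 or 2 (any vertex of the
other part is a common neighbour) and vertices of different parts are at distance 1. By
regularity the transmission is then constant on each part, and with `Bᵢ = (x - cᵢ) I - Aᵢ`,
`cᵢ = 2 nᵢ + nⱼ - rᵢ`, `J` the all-ones matrix,
`x I - L = diag (B₁ + J, B₂ + J) + J`.
All-ones vectors are eigenvectors of every matrix here, so three uses of the matrix determinant
lemma `β det (M + 𝟙𝟙ᵀ) = det M (β + |V|)` (for `M 𝟙 = β 𝟙`) give, after cancelling a factor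
`x - n₁ - n₂` (so first for `x ≠ n₁ + n₂`, then as polynomials),
`(x - 2n₁ - n₂)(x - n₁ - 2n₂) χ_L(x) = x (x - n₁ - n₂) χ_{A₁}(x - c₁) χ_{A₂}(x - c₂)`.
Comparing roots, the factor `x - 2n₁ - n₂ = x - (c₁ + r₁)` cancels against the eigenvalue `r₁`
of `A₁`, and likewise for `G₂`.
-/

open Matrix Polynomial

namespace Matrix

variable {n : Type*} [Fintype n]

theorem mul_det_add_vecMulVec_of_mulVec_eq_smul {K : Type*} [Field K] [DecidableEq n]
    {M : Matrix n n K} {u : n → K} {β : K} (hu : M *ᵥ u = β • u) (v : n → K) :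
    β * (M + vecMulVec u v).det = M.det * (β + v ⬝ᵥ u) := by
  rcases eq_or_ne β 0 with rfl | hβ
  · rcases eq_or_ne u 0 with rfl | hu₀
    · simp
    · have hM : M.det = 0 := exists_mulVec_eq_zero_iff.mp ⟨u, hu₀, by simpa using hu⟩
      simp [hM]
  · have hfactor : M + vecMulVec u v = M * (1 + vecMulVec (β⁻¹ • u) v) := by
      rw [Matrix.mul_add, Matrix.mul_one, mul_vecMulVec, mulVec_smul, hu, smul_smul,
        inv_mul_cancel₀ hβ, one_smul]
    rw [hfactor, det_mul, vecMulVec_eq Unit, det_one_add_replicateCol_mul_replicateRow,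
      dotProduct_smul, smul_eq_mul]
    field_simp

theorem add_vecMulVec_one_one_mulVec_one {R : Type*} [CommSemiring R] {M : Matrix n n R} {β : R}
    (h : M *ᵥ 1 = β • 1) :
    (M + vecMulVec 1 1) *ᵥ 1 = (β + Fintype.card n) • 1 := by
  rw [add_mulVec, h, vecMulVec_mulVec, one_dotProduct_one, op_smul_eq_smul, add_smul]

theorem fromBlocks_zero_zero_mulVec_one {m R : Type*} [Fintype m] [NonAssocSemiring R]
    {A : Matrix n n R} {D : Matrix m m R} {β : R} (hA : A *ᵥ 1 = β • 1) (hD : D *ᵥ 1 = β • 1) :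
    fromBlocks A 0 0 D *ᵥ 1 = β • 1 := by
  ext (i | i) <;> simp [fromBlocks_mulVec, hA, hD]

end Matrix

theorem Polynomial.roots_comp_X_sub_C {R : Type*} [CommRing R] [IsDomain R] (p : R[X]) (c : R) :
    (p.comp (X - C c)).roots = p.roots.map (c + ·) := by
  have h := roots_comp_C_mul_X_add_C p 1 (-c) isUnit_one
  simp only [C_1, one_mul, C_neg, ← sub_eq_add_neg, Ring.inverse_one, sub_neg_eq_add] at h
  rw [h]
  simp [add_comm]

namespace SimpleGraph

variable {V : Type*} [Fintype V] {G : SimpleGraph V} [DecidableRel G.Adj] {r : ℕ}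

theorem IsRegularOfDegree.adjMatrix_mulVec_one {R : Type*} [NonAssocSemiring R]
    (hreg : G.IsRegularOfDegree r) : G.adjMatrix R *ᵥ 1 = (r : R) • 1 := by
  ext v
  simpa using adjMatrix_mulVec_const_apply_of_regular (a := (1 : R)) hreg (v := v)

theorem IsRegularOfDegree.scalar_sub_adjMatrix_mulVec_one [DecidableEq V] {R : Type*}
    [CommRing R] (hreg : G.IsRegularOfDegree r) (y : R) :
    (scalar V y - G.adjMatrix R) *ᵥ 1 = (y - r) • 1 := by
  ext v
  simp [sub_mulVec, hreg.adjMatrix_mulVec_one]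

end SimpleGraph

section Join

open Sum

variable {V₁ V₂ : Type*} (G₁ : SimpleGraph V₁) (G₂ : SimpleGraph V₂)

theorem joinGraph_dist_inl_inr (u : V₁) (v : V₂) : (joinGraph G₁ G₂).dist (inl u) (inr v) = 1 :=
  SimpleGraph.dist_eq_one_iff_adj.mpr trivial

theorem joinGraph_dist_inr_inl (u : V₂) (v : V₁) : (joinGraph G₁ G₂).dist (inr u) (inl v) = 1 :=
  SimpleGraph.dist_eq_one_iff_adj.mpr trivial

theorem joinGraph_dist_inl_inl [DecidableEq V₁] [DecidableRel G₁.Adj] [Nonempty V₂] (u v : V₁) :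
    ((joinGraph G₁ G₂).dist (inl u) (inl v) : ℝ) =
      2 - G₁.adjMatrix ℝ u v - 2 * (1 : Matrix V₁ V₁ ℝ) u v := by
  obtain ⟨w⟩ := ‹Nonempty V₂›
  by_cases huv : u = v
  · subst huv; simp
  by_cases hadj : G₁.Adj u v
  · have : (joinGraph G₁ G₂).dist (inl u) (inl v) = 1 := SimpleGraph.dist_eq_one_iff_adj.mpr hadj
    norm_num [this, huv, hadj]
  · have : (joinGraph G₁ G₂).edist (inl u) (inl v) = 2 :=
      SimpleGraph.edist_eq_two_iff.mpr ⟨by simpa using huv, hadj, inr w, trivial, trivial⟩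
    simp [SimpleGraph.dist, this, huv, hadj]

theorem joinGraph_dist_inr_inr [DecidableEq V₂] [DecidableRel G₂.Adj] [Nonempty V₁] (u v : V₂) :
    ((joinGraph G₁ G₂).dist (inr u) (inr v) : ℝ) =
      2 - G₂.adjMatrix ℝ u v - 2 * (1 : Matrix V₂ V₂ ℝ) u v := by
  obtain ⟨w⟩ := ‹Nonempty V₁›
  by_cases huv : u = v
  · subst huv; simp
  by_cases hadj : G₂.Adj u v
  · have : (joinGraph G₁ G₂).dist (inr u) (inr v) = 1 := SimpleGraph.dist_eq_one_iff_adj.mpr hadj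
    norm_num [this, huv, hadj]
  · have : (joinGraph G₁ G₂).edist (inr u) (inr v) = 2 :=
      SimpleGraph.edist_eq_two_iff.mpr ⟨by simpa using huv, hadj, inl w, trivial, trivial⟩
    simp [SimpleGraph.dist, this, huv, hadj]

theorem transmission_joinGraph_inl [Fintype V₁] [DecidableEq V₁] [Fintype V₂]
    [DecidableRel G₁.Adj] [Nonempty V₂] {r₁ : ℕ} (hreg₁ : G₁.IsRegularOfDegree r₁) (u : V₁) :
    transmission (joinGraph G₁ G₂) (inl u) =
      2 * Fintype.card V₁ + Fintype.card V₂ - r₁ - 2 := by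
  have hrow := congrFun (hreg₁.adjMatrix_mulVec_one (R := ℝ)) u
  simp only [mulVec, dotProduct, Pi.one_apply, mul_one, Pi.smul_apply, smul_eq_mul] at hrow
  simp only [transmission, Fintype.sum_sum_type, joinGraph_dist_inl_inl, joinGraph_dist_inl_inr,
    Finset.sum_sub_distrib, hrow, ← Finset.mul_sum]
  simp [Matrix.one_apply]
  ring

theorem transmission_joinGraph_inr [Fintype V₁] [Fintype V₂] [DecidableEq V₂]
    [DecidableRel G₂.Adj] [Nonempty V₁] {r₂ : ℕ} (hreg₂ : G₂.IsRegularOfDegree r₂) (u : V₂) :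
    transmission (joinGraph G₁ G₂) (inr u) =
      2 * Fintype.card V₂ + Fintype.card V₁ - r₂ - 2 := by
  have hrow := congrFun (hreg₂.adjMatrix_mulVec_one (R := ℝ)) u
  simp only [mulVec, dotProduct, Pi.one_apply, mul_one, Pi.smul_apply, smul_eq_mul] at hrow
  simp only [transmission, Fintype.sum_sum_type, joinGraph_dist_inr_inr, joinGraph_dist_inr_inl,
    Finset.sum_sub_distrib, hrow, ← Finset.mul_sum]
  simp [Matrix.one_apply]
  ring

variable [Fintype V₁] [DecidableEq V₁] [Fintype V₂] [DecidableEq V₂]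
  [DecidableRel G₁.Adj] [DecidableRel G₂.Adj] [Nonempty V₁] [Nonempty V₂] {r₁ r₂ : ℕ}

theorem scalar_sub_distLaplacian_joinGraph (hreg₁ : G₁.IsRegularOfDegree r₁)
    (hreg₂ : G₂.IsRegularOfDegree r₂) (x : ℝ) :
    scalar (V₁ ⊕ V₂) x - distLaplacian (joinGraph G₁ G₂) =
      fromBlocks
        (scalar V₁ (x - (2 * Fintype.card V₁ + Fintype.card V₂ - r₁)) - G₁.adjMatrix ℝ +
          vecMulVec 1 1) 0 0
        (scalar V₂ (x - (2 * Fintype.card V₂ + Fintype.card V₁ - r₂)) - G₂.adjMatrix ℝ +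
          vecMulVec 1 1) +
      vecMulVec 1 1 := by
  ext (a | a) (b | b)
  · by_cases hab : a = b <;>
      simp [distLaplacian, distMatrix, hab, transmission_joinGraph_inl G₁ G₂ hreg₁,
        joinGraph_dist_inl_inl] <;> ring
  · simp [distLaplacian, distMatrix, joinGraph_dist_inl_inr]
  · simp [distLaplacian, distMatrix, joinGraph_dist_inr_inl]
  · by_cases hab : a = b <;>
      simp [distLaplacian, distMatrix, hab, transmission_joinGraph_inr G₁ G₂ hreg₂,
        joinGraph_dist_inr_inr] <;> ring

theorem eval_charpoly_distLaplacian_joinGraph (hreg₁ : G₁.IsRegularOfDegree r₁)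
    (hreg₂ : G₂.IsRegularOfDegree r₂) {x : ℝ}
    (hx : x ≠ Fintype.card V₁ + Fintype.card V₂) :
    (x - (2 * Fintype.card V₁ + Fintype.card V₂)) *
        (x - (2 * Fintype.card V₂ + Fintype.card V₁)) *
        (distLaplacian (joinGraph G₁ G₂)).charpoly.eval x =
      x * (x - (Fintype.card V₁ + Fintype.card V₂)) *
        (G₁.adjMatrix ℝ).charpoly.eval (x - (2 * Fintype.card V₁ + Fintype.card V₂ - r₁)) *
        (G₂.adjMatrix ℝ).charpoly.eval (x - (2 * Fintype.card V₂ + Fintype.card V₁ - r₂)) := by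
  rw [eval_charpoly, eval_charpoly, eval_charpoly]
  set n₁ : ℝ := (Fintype.card V₁ : ℝ) with hn₁
  set n₂ : ℝ := (Fintype.card V₂ : ℝ) with hn₂
  set B₁ := scalar V₁ (x - (2 * n₁ + n₂ - r₁)) - G₁.adjMatrix ℝ
  set B₂ := scalar V₂ (x - (2 * n₂ + n₁ - r₂)) - G₂.adjMatrix ℝ
  have hB₁ : B₁ *ᵥ 1 = (x - (2 * n₁ + n₂)) • 1 := by
    rw [hreg₁.scalar_sub_adjMatrix_mulVec_one]; congr 1; ring
  have hB₂ : B₂ *ᵥ 1 = (x - (2 * n₂ + n₁)) • 1 := by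
    rw [hreg₂.scalar_sub_adjMatrix_mulVec_one]; congr 1; ring
  have hJ₁ : (B₁ + vecMulVec 1 1) *ᵥ 1 = (x - (n₁ + n₂)) • 1 := by
    rw [add_vecMulVec_one_one_mulVec_one hB₁]; congr 1; ring
  have hJ₂ : (B₂ + vecMulVec 1 1) *ᵥ 1 = (x - (n₁ + n₂)) • 1 := by
    rw [add_vecMulVec_one_one_mulVec_one hB₂]; congr 1; ring
  have hdet :=
    mul_det_add_vecMulVec_of_mulVec_eq_smul (fromBlocks_zero_zero_mulVec_one hJ₁ hJ₂) 1
  have hdet₁ := mul_det_add_vecMulVec_of_mulVec_eq_smul hB₁ 1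
  have hdet₂ := mul_det_add_vecMulVec_of_mulVec_eq_smul hB₂ 1
  rw [← scalar_sub_distLaplacian_joinGraph G₁ G₂ hreg₁ hreg₂, det_fromBlocks_zero₁₂] at hdet
  simp only [one_dotProduct_one, Fintype.card_sum, Nat.cast_add, ← hn₁, ← hn₂]
    at hdet hdet₁ hdet₂
  refine mul_left_cancel₀ (sub_ne_zero.mpr hx) ?_
  linear_combination (x - (2 * n₁ + n₂)) * (x - (2 * n₂ + n₁)) * hdet +
    x * (x - (2 * n₂ + n₁)) * (B₂ + vecMulVec 1 1).det * hdet₁ +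
    x * B₁.det * (x - (n₁ + n₂)) * hdet₂

theorem charpoly_distLaplacian_joinGraph (hreg₁ : G₁.IsRegularOfDegree r₁)
    (hreg₂ : G₂.IsRegularOfDegree r₂) :
    (X - C (2 * Fintype.card V₁ + Fintype.card V₂ : ℝ)) *
        (X - C (2 * Fintype.card V₂ + Fintype.card V₁ : ℝ)) *
        (distLaplacian (joinGraph G₁ G₂)).charpoly =
      X * (X - C (Fintype.card V₁ + Fintype.card V₂ : ℝ)) *
        (G₁.adjMatrix ℝ).charpoly.comp
          (X - C (2 * Fintype.card V₁ + Fintype.card V₂ - r₁ : ℝ)) *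
        (G₂.adjMatrix ℝ).charpoly.comp
          (X - C (2 * Fintype.card V₂ + Fintype.card V₁ - r₂ : ℝ)) := by
  refine eq_of_infinite_eval_eq _ _
    ((Set.finite_singleton (Fintype.card V₁ + Fintype.card V₂ : ℝ)).infinite_compl.mono
      fun x hx => ?_)
  simpa using eval_charpoly_distLaplacian_joinGraph G₁ G₂ hreg₁ hreg₂ hx

theorem roots_charpoly_distLaplacian_joinGraph (hreg₁ : G₁.IsRegularOfDegree r₁)
    (hreg₂ : G₂.IsRegularOfDegree r₂) :
    {2 * (Fintype.card V₁ : ℝ) + Fintype.card V₂, 2 * (Fintype.card V₂ : ℝ) + Fintype.card V₁} +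
        (distLaplacian (joinGraph G₁ G₂)).charpoly.roots =
      {0, (Fintype.card V₁ : ℝ) + Fintype.card V₂} +
        (G₁.adjMatrix ℝ).charpoly.roots.map
          (2 * (Fintype.card V₁ : ℝ) + Fintype.card V₂ - r₁ + ·) +
        (G₂.adjMatrix ℝ).charpoly.roots.map
          (2 * (Fintype.card V₂ : ℝ) + Fintype.card V₁ - r₂ + ·) := by
  have h := congrArg roots (charpoly_distLaplacian_joinGraph G₁ G₂ hreg₁ hreg₂)
  rwa [roots_mul, roots_mul, roots_mul, roots_mul, roots_mul, roots_X_sub_C, roots_X_sub_C,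
    roots_X_sub_C, roots_X, roots_comp_X_sub_C, roots_comp_X_sub_C] at h
  all_goals
    refine Monic.ne_zero ?_
    apply_rules [Monic.mul, monic_X_sub_C, monic_X, charpoly_monic, Monic.comp_X_sub_C]

end Join

theorem stmt4 {V₁ V₂ : Type*} [Fintype V₁] [DecidableEq V₁] [Fintype V₂] [DecidableEq V₂]
    (G₁ : SimpleGraph V₁) (G₂ : SimpleGraph V₂)
    [DecidableRel G₁.Adj] [DecidableRel G₂.Adj]
    (n₁ n₂ : ℕ) (hn₁ : Fintype.card V₁ = n₁) (hn₂ : Fintype.card V₂ = n₂)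
    (r₁ r₂ : ℕ) (hreg₁ : G₁.IsRegularOfDegree r₁) (hreg₂ : G₂.IsRegularOfDegree r₂)
    (lam : V₁ → ℝ) (mu : V₂ → ℝ)
    (hlam : (G₁.adjMatrix ℝ).charpoly.roots = Finset.univ.val.map lam)
    (hmu : (G₂.adjMatrix ℝ).charpoly.roots = Finset.univ.val.map mu)
    (w₁ : V₁) (hw₁ : lam w₁ = r₁) (w₂ : V₂) (hw₂ : mu w₂ = r₂) :
    (distLaplacian (joinGraph G₁ G₂)).charpoly.roots =
      ({0, (n₁ : ℝ) + (n₂ : ℝ)} : Multiset ℝ)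
      + ((Finset.univ.erase w₁).val.map fun v =>
          2 * (n₁ : ℝ) + (n₂ : ℝ) - (r₁ : ℝ) + lam v)
      + ((Finset.univ.erase w₂).val.map fun v =>
          2 * (n₂ : ℝ) + (n₁ : ℝ) - (r₂ : ℝ) + mu v) := by
  subst hn₁ hn₂
  have : Nonempty V₁ := ⟨w₁⟩
  have : Nonempty V₂ := ⟨w₂⟩
  have h := roots_charpoly_distLaplacian_joinGraph G₁ G₂ hreg₁ hreg₂
  rw [hlam, hmu, ← Multiset.cons_erase (Finset.mem_univ_val w₁),
    ← Multiset.cons_erase (Finset.mem_univ_val w₂)] at h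
  simp only [Multiset.map_cons, Multiset.map_map, Function.comp_def, hw₁, hw₂, sub_add_cancel]
    at h
  refine (add_right_inj _).mp (h.trans ?_)
  simp only [Multiset.insert_eq_cons, ← Multiset.singleton_add, Finset.erase_val]
  abel
end

section
/- The distance Laplacian spectrum of the complete bipartite graph K_{n₁,n₂} consists of the simple eigenvalues 0 and n₁ + n₂, the eigenvalue 2n₁ + n₂ with multiplicity n₁ − 1, and the eigenvalue n₁ + 2n₂ with multiplicity n₂ − 1. -/
/-!
The distance Laplacian of `K_{n₁,n₂}` has an explicit eigenbasis. Its rows sum to zero, so the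
all-ones vector has eigenvalue `0`; the vector equal to `n₂` on the first part and `-n₁` on the
second has eigenvalue `n₁ + n₂`. Two vertices `u ≠ v` of the same part are twins (equidistant
from every other vertex), which makes `e_u - e_v` an eigenvector with eigenvalue
`Tr(u) + d(u, v)`, i.e. `2n₁ + n₂` or `n₁ + 2n₂`. Fixing one vertex in each part, these
`n₁ + n₂` vectors are linearly independent: the two part sums of a vanishing combination kill
the first two coefficients, and the remaining ones are read off coordinatewise.
-/

open Finset

open Polynomial

namespace Matrix

variable {K n : Type*} [Field K] [Fintype n] [DecidableEq n]

theorem charpoly_eq_prod_of_linearIndependent_eigenvectors (A : Matrix n n K) {f : n → n → K}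
    (hf : LinearIndependent K f) (d : n → K) (hA : ∀ i, A *ᵥ f i = d i • f i) :
    A.charpoly = ∏ i, (X - C (d i)) := by
  obtain ⟨U, hU⟩ : IsUnit (of f)ᵀ :=
    (isUnit_transpose _).2 (linearIndependent_rows_iff_isUnit.1 hf)
  have hAU : A * U = U * diagonal d := by
    ext i j
    rw [hU, mul_diagonal, mul_apply]
    simpa [mulVec, dotProduct, mul_comm] using congrFun (hA j) i
  rw [← charpoly_diagonal, ← charpoly_units_conj U (diagonal d), ← hAU, ← coe_units_inv,
    Units.mul_inv_cancel_right]

theorem roots_charpoly_of_linearIndependent_eigenvectors (A : Matrix n n K) {f : n → n → K}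
    (hf : LinearIndependent K f) (d : n → K) (hA : ∀ i, A *ᵥ f i = d i • f i) :
    A.charpoly.roots = univ.val.map d := by
  rw [charpoly_eq_prod_of_linearIndependent_eigenvectors A hf d hA, prod_eq_multiset_prod,
    ← roots_multiset_prod_X_sub_C (univ.val.map d), Multiset.map_map]
  rfl

theorem dotProduct_comp_eq_zero_of_sum_smul_eq_zero {R M ι : Type*} [CommSemiring R]
    [AddCommMonoid M] [Module R M] [Fintype ι] {g : ι → R} {f : ι → M}
    (hg : ∑ i, g i • f i = 0) (ψ : M →ₗ[R] R) : g ⬝ᵥ (ψ ∘ f) = 0 := by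
  simpa [dotProduct] using congrArg ψ hg

end Matrix

theorem Finset.sum_ite_eq_zero_else_const {α R : Type*} [Fintype α] [DecidableEq α] [Ring R]
    (a : α) (c : R) : ∑ x, (if a = x then 0 else c) = (Fintype.card α - 1) * c := by
  rw [sum_ite, sum_const_zero, zero_add, sum_const, nsmul_eq_mul, filter_ne univ a,
    card_erase_of_mem (mem_univ a), card_univ, Nat.cast_pred (Fintype.card_pos_iff.2 ⟨a⟩)]

theorem Finset.univ_val_map_ite_eq {α M : Type*} [Fintype α] [DecidableEq α] (a₀ : α)
    (x y : M) :
    univ.val.map (fun a => if a = a₀ then x else y) =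
      x ::ₘ Multiset.replicate (Fintype.card α - 1) y := by
  rw [← Multiset.cons_erase (mem_univ_val a₀), Multiset.map_cons, if_pos rfl]
  congr 1
  refine Multiset.eq_replicate.2 ⟨by simp [Multiset.card_erase_of_mem], fun y' hy' => ?_⟩
  obtain ⟨a, ha, rfl⟩ := Multiset.mem_map.1 hy'
  rw [if_neg (univ.nodup.mem_erase_iff.1 ha).1]

open Matrix

section DistLaplacian

variable {V : Type*} [Fintype V] [DecidableEq V] (G : SimpleGraph V)

theorem distLaplacian_apply (u v : V) :
    distLaplacian G u v = (if u = v then transmission G u else 0) - G.dist u v := by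
  simp [distLaplacian, distMatrix, diagonal_apply]

theorem distLaplacian_mulVec_one : distLaplacian G *ᵥ 1 = 0 := by
  ext u
  simp [distLaplacian, mulVec, dotProduct, diagonal_apply, distMatrix, transmission]

variable {G} {u v : V}

theorem transmission_eq_of_twins (h : ∀ x, x ≠ u → x ≠ v → G.dist u x = G.dist v x) :
    transmission G u = transmission G v := by
  unfold transmission
  rw [← Equiv.sum_comp (Equiv.swap u v)]
  refine sum_congr rfl fun x _ => ?_
  rcases eq_or_ne x u with rfl | hxu
  · simp [SimpleGraph.dist_comm]
  rcases eq_or_ne x v with rfl | hxv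
  · simp
  · rw [Equiv.swap_apply_of_ne_of_ne hxu hxv, h x hxu hxv]

theorem distLaplacian_mulVec_single_sub_single (huv : u ≠ v)
    (h : ∀ x, x ≠ u → x ≠ v → G.dist u x = G.dist v x) :
    distLaplacian G *ᵥ (Pi.single u 1 - Pi.single v 1) =
      (transmission G u + G.dist u v) • (Pi.single u 1 - Pi.single v 1) := by
  ext x
  rw [mulVec_sub, Pi.sub_apply, mulVec_single_one, mulVec_single_one]
  simp only [col_apply, distLaplacian_apply, Pi.smul_apply, Pi.sub_apply, smul_eq_mul]
  rcases eq_or_ne x u with rfl | hxu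
  · simp [huv, SimpleGraph.dist_comm]
  rcases eq_or_ne x v with rfl | hxv
  · simp [hxu, transmission_eq_of_twins h, SimpleGraph.dist_comm]; ring
  · simp [hxu, hxv, SimpleGraph.dist_comm (u := x), h x hxu hxv]

end DistLaplacian

section CompleteBipartite

open SimpleGraph Sum Fintype

variable {α β : Type*}

theorem completeBipartiteGraph_dist_inl_inr (a : α) (b : β) :
    (completeBipartiteGraph α β).dist (inl a) (inr b) = 1 := by
  simp [dist_eq_one_iff_adj]

theorem completeBipartiteGraph_dist_inr_inl (a : α) (b : β) :
    (completeBipartiteGraph α β).dist (inr b) (inl a) = 1 := by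
  simp [dist_eq_one_iff_adj]

theorem completeBipartiteGraph_dist_inl_inl [DecidableEq α] [Nonempty β] (a a' : α) :
    (completeBipartiteGraph α β).dist (inl a) (inl a') = if a = a' then 0 else 2 := by
  split_ifs with h
  · simp [h]
  · have : (completeBipartiteGraph α β).edist (inl a) (inl a') = 2 :=
      edist_eq_two_iff.2 ⟨by simpa, by simp,
        ⟨inr (Classical.arbitrary β), by simp [mem_commonNeighbors]⟩⟩
    simp [SimpleGraph.dist, this]

theorem completeBipartiteGraph_dist_inr_inr [DecidableEq β] [Nonempty α] (b b' : β) :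
    (completeBipartiteGraph α β).dist (inr b) (inr b') = if b = b' then 0 else 2 := by
  split_ifs with h
  · simp [h]
  · have : (completeBipartiteGraph α β).edist (inr b) (inr b') = 2 :=
      edist_eq_two_iff.2 ⟨by simpa, by simp,
        ⟨inl (Classical.arbitrary α), by simp [mem_commonNeighbors]⟩⟩
    simp [SimpleGraph.dist, this]

variable [Fintype α] [Fintype β]

theorem transmission_completeBipartiteGraph_inl [DecidableEq α] [Nonempty β] (a : α) :
    transmission (completeBipartiteGraph α β) (inl a) = 2 * (card α - 1) + card β := by
  simp [transmission, completeBipartiteGraph_dist_inl_inl, completeBipartiteGraph_dist_inl_inr,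
    sum_ite_eq_zero_else_const, mul_comm]

theorem transmission_completeBipartiteGraph_inr [DecidableEq β] [Nonempty α] (b : β) :
    transmission (completeBipartiteGraph α β) (inr b) = card α + 2 * (card β - 1) := by
  simp [transmission, completeBipartiteGraph_dist_inr_inr, completeBipartiteGraph_dist_inr_inl,
    sum_ite_eq_zero_else_const, mul_comm]

variable (α β) in
def partContrast : α ⊕ β → ℝ := Sum.elim (fun _ => card β) (fun _ => -card α)

variable [DecidableEq α] [DecidableEq β]

theorem distLaplacian_completeBipartiteGraph_mulVec_indicator :
    distLaplacian (completeBipartiteGraph α β) *ᵥ (Sum.elim 1 0 : α ⊕ β → ℝ) =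
      partContrast α β := by
  ext (a | b)
  · simp [mulVec, dotProduct, distLaplacian_apply, transmission,
      completeBipartiteGraph_dist_inl_inr, partContrast]
  · simp [mulVec, dotProduct, distLaplacian_apply, completeBipartiteGraph_dist_inr_inl,
      partContrast]

theorem distLaplacian_completeBipartiteGraph_mulVec_partContrast :
    distLaplacian (completeBipartiteGraph α β) *ᵥ partContrast α β =
      (card α + card β : ℝ) • partContrast α β := by
  have h : partContrast α β =
      (card α + card β : ℝ) • (Sum.elim 1 0 : α ⊕ β → ℝ) - (card α : ℝ) • 1 := by
    ext (a | b) <;> simp [partContrast]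
  conv_lhs => rw [h]
  rw [mulVec_sub, mulVec_smul, mulVec_smul, distLaplacian_mulVec_one,
    distLaplacian_completeBipartiteGraph_mulVec_indicator, smul_zero, sub_zero]

theorem distLaplacian_completeBipartiteGraph_mulVec_single_inl_sub [Nonempty β] {a a' : α}
    (h : a ≠ a') :
    distLaplacian (completeBipartiteGraph α β) *ᵥ (Pi.single (inl a) 1 - Pi.single (inl a') 1) =
      (2 * card α + card β : ℝ) • (Pi.single (inl a) 1 - Pi.single (inl a') 1) := by
  rw [distLaplacian_mulVec_single_sub_single (by simpa using h),
    transmission_completeBipartiteGraph_inl, completeBipartiteGraph_dist_inl_inl, if_neg h]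
  · congr 1; push_cast; ring
  · rintro (x | x) hx hx'
    · simp_all [completeBipartiteGraph_dist_inl_inl, eq_comm]
    · simp [completeBipartiteGraph_dist_inl_inr]

theorem distLaplacian_completeBipartiteGraph_mulVec_single_inr_sub [Nonempty α] {b b' : β}
    (h : b ≠ b') :
    distLaplacian (completeBipartiteGraph α β) *ᵥ (Pi.single (inr b) 1 - Pi.single (inr b') 1) =
      (card α + 2 * card β : ℝ) • (Pi.single (inr b) 1 - Pi.single (inr b') 1) := by
  rw [distLaplacian_mulVec_single_sub_single (by simpa using h),
    transmission_completeBipartiteGraph_inr, completeBipartiteGraph_dist_inr_inr, if_neg h]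
  · congr 1; push_cast; ring
  · rintro (x | x) hx hx'
    · simp [completeBipartiteGraph_dist_inr_inl]
    · simp_all [completeBipartiteGraph_dist_inr_inr, eq_comm]

variable (a₀ : α) (b₀ : β)

def bipartiteEigenvector : α ⊕ β → α ⊕ β → ℝ
  | inl a => if a = a₀ then 1 else Pi.single (inl a) 1 - Pi.single (inl a₀) 1
  | inr b => if b = b₀ then partContrast α β else Pi.single (inr b) 1 - Pi.single (inr b₀) 1

def bipartiteEigenvalue : α ⊕ β → ℝ
  | inl a => if a = a₀ then 0 else 2 * card α + card β
  | inr b => if b = b₀ then card α + card β else card α + 2 * card β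

theorem distLaplacian_completeBipartiteGraph_mulVec_bipartiteEigenvector (i : α ⊕ β) :
    distLaplacian (completeBipartiteGraph α β) *ᵥ bipartiteEigenvector a₀ b₀ i =
      bipartiteEigenvalue a₀ b₀ i • bipartiteEigenvector a₀ b₀ i := by
  have : Nonempty α := ⟨a₀⟩
  have : Nonempty β := ⟨b₀⟩
  rcases i with a | b
  · by_cases h : a = a₀
    · simp [bipartiteEigenvector, bipartiteEigenvalue, h, distLaplacian_mulVec_one]
    · simpa [bipartiteEigenvector, bipartiteEigenvalue, h] using
        distLaplacian_completeBipartiteGraph_mulVec_single_inl_sub h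
  · by_cases h : b = b₀
    · simpa [bipartiteEigenvector, bipartiteEigenvalue, h] using
        distLaplacian_completeBipartiteGraph_mulVec_partContrast
    · simpa [bipartiteEigenvector, bipartiteEigenvalue, h] using
        distLaplacian_completeBipartiteGraph_mulVec_single_inr_sub h

theorem bipartiteEigenvector_apply_inl {a : α} (h : a ≠ a₀) :
    (fun i => bipartiteEigenvector a₀ b₀ i (inl a)) =
      Pi.single (inl a₀) 1 + Pi.single (inr b₀) (card β : ℝ) + Pi.single (inl a) 1 := by
  ext (a' | b)
  · by_cases ha' : a' = a₀
    · subst ha'; simp [bipartiteEigenvector, Ne.symm h]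
    · by_cases haa : a' = a <;> simp [bipartiteEigenvector, ha', h, haa]
  · by_cases hb : b = b₀ <;> simp [bipartiteEigenvector, hb, partContrast]

theorem bipartiteEigenvector_apply_inr {b : β} (h : b ≠ b₀) :
    (fun i => bipartiteEigenvector a₀ b₀ i (inr b)) =
      Pi.single (inl a₀) 1 - Pi.single (inr b₀) (card α : ℝ) + Pi.single (inr b) 1 := by
  ext (a | b')
  · by_cases ha : a = a₀ <;> simp [bipartiteEigenvector, ha]
  · by_cases hb' : b' = b₀
    · subst hb'; simp [bipartiteEigenvector, Ne.symm h, partContrast]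
    · by_cases hbb : b' = b <;> simp [bipartiteEigenvector, hb', h, hbb]

theorem sum_bipartiteEigenvector_apply_inl :
    (fun i => ∑ a, bipartiteEigenvector a₀ b₀ i (inl a)) =
      Pi.single (inl a₀) (card α : ℝ) + Pi.single (inr b₀) (card α * card β : ℝ) := by
  ext (a | b)
  · by_cases ha : a = a₀ <;> simp [bipartiteEigenvector, ha, Pi.single_apply]
  · by_cases hb : b = b₀ <;> simp [bipartiteEigenvector, hb, partContrast]

theorem sum_bipartiteEigenvector_apply_inr :
    (fun i => ∑ b, bipartiteEigenvector a₀ b₀ i (inr b)) =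
      Pi.single (inl a₀) (card β : ℝ) - Pi.single (inr b₀) (card α * card β : ℝ) := by
  ext (a | b)
  · by_cases ha : a = a₀ <;> simp [bipartiteEigenvector, ha]
  · by_cases hb : b = b₀ <;>
      simp [bipartiteEigenvector, hb, partContrast, Pi.single_apply, mul_comm]

theorem linearIndependent_bipartiteEigenvector :
    LinearIndependent ℝ (bipartiteEigenvector a₀ b₀) := by
  rw [Fintype.linearIndependent_iff]
  intro g hg
  have hp : (0 : ℝ) < card α := by exact_mod_cast card_pos_iff.2 ⟨a₀⟩
  have hq : (0 : ℝ) < card β := by exact_mod_cast card_pos_iff.2 ⟨b₀⟩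
  have key := dotProduct_comp_eq_zero_of_sum_smul_eq_zero hg
  have hsum₁ : g ⬝ᵥ (fun i => ∑ a, bipartiteEigenvector a₀ b₀ i (inl a)) = 0 := by
    simpa [Function.comp_def] using key (∑ a, LinearMap.proj (inl a))
  have hsum₂ : g ⬝ᵥ (fun i => ∑ b, bipartiteEigenvector a₀ b₀ i (inr b)) = 0 := by
    simpa [Function.comp_def] using key (∑ b, LinearMap.proj (inr b))
  rw [sum_bipartiteEigenvector_apply_inl, dotProduct_add, dotProduct_single,
    dotProduct_single] at hsum₁
  rw [sum_bipartiteEigenvector_apply_inr, dotProduct_sub, dotProduct_single,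
    dotProduct_single] at hsum₂
  obtain ⟨h₀, h₁⟩ : g (inl a₀) = 0 ∧ g (inr b₀) = 0 := by
    have e₁ : g (inl a₀) + card β * g (inr b₀) = 0 :=
      (mul_eq_zero.1 (by linear_combination hsum₁ : (card α : ℝ) * _ = 0)).resolve_left
        hp.ne'
    have e₂ : g (inl a₀) - card α * g (inr b₀) = 0 :=
      (mul_eq_zero.1 (by linear_combination hsum₂ : (card β : ℝ) * _ = 0)).resolve_left
        hq.ne'
    have e₃ : g (inr b₀) = 0 :=
      (mul_eq_zero.1
        (by linear_combination e₁ - e₂ : (card α + card β : ℝ) * _ = 0)).resolve_left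
        (by positivity)
    exact ⟨by linear_combination e₁ - card β * e₃, e₃⟩
  rintro (a | b)
  · by_cases ha : a = a₀
    · rwa [ha]
    · simpa [Function.comp_def, bipartiteEigenvector_apply_inl a₀ b₀ ha, h₀, h₁] using
        key (LinearMap.proj (inl a))
  · by_cases hb : b = b₀
    · rwa [hb]
    · simpa [Function.comp_def, bipartiteEigenvector_apply_inr a₀ b₀ hb, h₀, h₁] using
        key (LinearMap.proj (inr b))

theorem univ_val_map_bipartiteEigenvalue :
    univ.val.map (bipartiteEigenvalue a₀ b₀) =
      (0 ::ₘ Multiset.replicate (card α - 1) (2 * card α + card β : ℝ)) +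
        ((card α + card β : ℝ) ::ₘ
          Multiset.replicate (card β - 1) (card α + 2 * card β : ℝ)) := by
  rw [← univ_disjSum_univ, val_disjSum, Multiset.map_disjSum, ← univ_val_map_ite_eq a₀,
    ← univ_val_map_ite_eq b₀]
  rfl

theorem roots_charpoly_distLaplacian_completeBipartiteGraph [Nonempty α] [Nonempty β] :
    (distLaplacian (completeBipartiteGraph α β)).charpoly.roots =
      (0 ::ₘ Multiset.replicate (card α - 1) (2 * card α + card β : ℝ)) +
        ((card α + card β : ℝ) ::ₘ
          Multiset.replicate (card β - 1) (card α + 2 * card β : ℝ)) := by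
  obtain ⟨a₀⟩ := ‹Nonempty α›
  obtain ⟨b₀⟩ := ‹Nonempty β›
  rw [roots_charpoly_of_linearIndependent_eigenvectors _
    (linearIndependent_bipartiteEigenvector a₀ b₀) _
    (distLaplacian_completeBipartiteGraph_mulVec_bipartiteEigenvector a₀ b₀),
    univ_val_map_bipartiteEigenvalue]

end CompleteBipartite

theorem stmt5 (n₁ n₂ : ℕ) (h₁ : 1 ≤ n₁) (h₂ : 1 ≤ n₂) :
    (distLaplacian (completeBipartiteGraph (Fin n₁) (Fin n₂))).charpoly.roots =
      ({0, (n₁ : ℝ) + (n₂ : ℝ)} : Multiset ℝ)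
      + Multiset.replicate (n₁ - 1) (2 * (n₁ : ℝ) + (n₂ : ℝ))
      + Multiset.replicate (n₂ - 1) ((n₁ : ℝ) + 2 * (n₂ : ℝ)) := by
  have : NeZero n₁ := ⟨by omega⟩
  have : NeZero n₂ := ⟨by omega⟩
  rw [roots_charpoly_distLaplacian_completeBipartiteGraph]
  simp only [Fintype.card_fin, Multiset.insert_eq_cons, Multiset.singleton_add,
    Multiset.cons_add, Multiset.add_cons]
  exact Multiset.cons_swap _ _ _
end

section
/- For i = 1, 2, 3, let Gᵢ be an rᵢ-regular graph on nᵢ vertices with adjacency spectra {r₁ = λ₁, λ₂, …, λ_{n₁}}, {r₂ = μ₁, μ₂, …, μ_{n₂}}, and {r₃ = δ₁, δ₂, …, δ_{n₃}}, respectively. Then the distance Laplacian spectrum of G₁∇(G₂ ∪ G₃) consists of the eigenvalues 0, n₁ + n₂ + n₃, n₁ + 2n₂ + 2n₃, the eigenvalues 2n₁ + n₂ + n₃ − r₁ + λⱼ for j = 2, 3, …, n₁, the eigenvalues n₁ + 2n₂ + 2n₃ − r₂ + μⱼ for j = 2, 3, …, n₂, and the eigenvalues n₁ + 2n₂ + 2n₃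 − r₃ + δⱼ for j = 2, 3, …, n₃. -/
/-!
Any two distinct vertices of `G₁ ∇ (G₂ ∪ G₃)` have a common neighbour, so distances are `1` or `2`
and the distance Laplacian is `2n I - 2J - L(G)`. With respect to the partition `V₁ | V₂ | V₃` its
diagonal blocks are `cᵢ I + Aᵢ - 2J` and its off-diagonal blocks are constant. For such a matrix,
replacing the column of a vertex `w ∈ Vᵢ` by the indicator vector of `Vᵢ` is a similarity which
splits off the block `(Aᵢ a b - Aᵢ w b)_{a, b ≠ w}`, whose spectrum is that of `Aᵢ` with one copy
of `rᵢ` removed, and collapses `Vᵢ` to a single vertex. Collapsing `V₁`, `V₂`, `V₃` in turn leaves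
a `3 × 3` quotient matrix with eigenvalues `0`, `n₁ + n₂ + n₃` and `n₁ + 2n₂ + 2n₃`.
-/

open Finset

/-- The disjoint union of two vertex-disjoint graphs. -/
def disjUnionGraph {V₂ V₃ : Type*} (G₂ : SimpleGraph V₂) (G₃ : SimpleGraph V₃) :
    SimpleGraph (V₂ ⊕ V₃) where
  Adj x y :=
    match x, y with
    | Sum.inl u, Sum.inl v => G₂.Adj u v
    | Sum.inr u, Sum.inr v => G₃.Adj u v
    | _, _ => False
  symm := by
    constructor
    rintro (u | u) (v | v) h
    · exact G₂.adj_symm h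
    · exact h.elim
    · exact h.elim
    · exact G₃.adj_symm h
  loopless := by
    constructor
    rintro (u | u) h
    · exact G₂.irrefl h
    · exact G₃.irrefl h

open Matrix Polynomial

namespace Matrix

variable {R α β : Type*}

def deflate [Sub R] (A : Matrix α α R) (w : α) : Matrix {a // a ≠ w} {a // a ≠ w} R :=
  of fun a b => A a b - A w b

/-- The block `α` of `L` collapsed to the single vertex `Unit`, whose column holds the row sums
over `α` and whose row is the row of `w`. -/
def collapse [AddCommMonoid R] [Fintype α] (L : Matrix (α ⊕ β) (α ⊕ β) R) (w : α) :
    Matrix (β ⊕ Unit) (β ⊕ Unit) R :=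
  fromBlocks L.toBlocks₂₂ (of fun b _ => ∑ a, L (.inr b) (.inl a))
    (of fun _ b => L (.inl w) (.inr b)) (of fun _ _ => ∑ a, L (.inl w) (.inl a))

def collapseEquiv [DecidableEq α] (w : α) : {a // a ≠ w} ⊕ (β ⊕ Unit) ≃ α ⊕ β where
  toFun
    | .inl a => .inl a
    | .inr (.inl b) => .inr b
    | .inr (.inr _) => .inl w
  invFun
    | .inl a => if h : a = w then .inr (.inr ()) else .inl ⟨a, h⟩
    | .inr b => .inr (.inl b)
  left_inv := by rintro (⟨a, h⟩ | b | ⟨⟩) <;> simp [*]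
  right_inv := by rintro (a | b) <;> [by_cases h : a = w; skip] <;> simp [*]

theorem deflate_smul_one_add_sub_const [Ring R] [DecidableEq α] (c d : R) (A : Matrix α α R)
    (w : α) : deflate (c • 1 + A - of fun _ _ => d) w = c • 1 + deflate A w := by
  ext ⟨a, ha⟩ ⟨b, hb⟩
  simp [deflate, one_apply, Ne.symm hb, Subtype.ext_iff, add_sub_assoc]

variable [CommRing R] [Fintype α] [DecidableEq α] [Fintype β] [DecidableEq β]

theorem charpoly_mul_mul_of_mul_eq_one {P Q : Matrix α α R} (h : Q * P = 1) (L : Matrix α α R) :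
    (P * L * Q).charpoly = L.charpoly := by
  rw [charpoly_mul_comm, ← mul_assoc, h, one_mul]

theorem charpoly_eq_charpoly_deflate_mul_charpoly_collapse (L : Matrix (α ⊕ β) (α ⊕ β) R)
    (w : α) (hrow : ∀ a, ∑ a', L (.inl a) (.inl a') = ∑ a', L (.inl w) (.inl a'))
    (hcol : ∀ a b, L (.inl a) (.inr b) = L (.inl w) (.inr b)) :
    L.charpoly = (deflate L.toBlocks₁₁ w).charpoly * (collapse L w).charpoly := by
  -- right multiplication by `1 + u vᵀ` replaces the column of `w` by the indicator of `α`
  set u : α ⊕ β → R := Sum.elim (fun _ => 1) (fun _ => 0) - Pi.single (.inl w) 1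
  set v : α ⊕ β → R := Pi.single (.inl w) 1
  have hinv : (1 + vecMulVec u v) * (1 - vecMulVec u v) = 1 := by
    have hvu : v ⬝ᵥ u = 0 := by simp [u, v]
    rw [mul_sub, mul_one, add_mul, one_mul, vecMulVec_mul_vecMulVec, hvu, zero_smul,
      vecMulVec_zero, add_zero, add_sub_cancel_right]
  set s : α ⊕ β → R := fun x => ∑ a, L x (.inl a)
  have hLu : L *ᵥ u = fun x => s x - L x (.inl w) := by
    ext x
    simp [u, s, mulVec, dotProduct, Fintype.sum_sum_type, mul_sub, Pi.single_apply]
  set L' := L * (1 + vecMulVec u v)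
  have hL' : ∀ x y, L' x y = L x y + (s x - L x (.inl w)) * v y := by
    intro x y
    simp [L', mul_add, mul_vecMulVec, hLu, vecMulVec_apply]
  have hentry : ∀ x y, ((1 - vecMulVec u v) * L') x y = L' x y - u x * L' (.inl w) y := by
    intro x y
    simp [sub_mul, vecMulVec_mul, v, vecMulVec_apply]
  have hblocks : ((1 - vecMulVec u v) * L').submatrix (collapseEquiv w) (collapseEquiv w) =
      fromBlocks (deflate L.toBlocks₁₁ w) 0
        (of fun i a => L (collapseEquiv w (.inr i)) (.inl a)) (collapse L w) := by
    ext (⟨a, ha⟩ | b | ⟨⟩) (⟨a', ha'⟩ | b' | ⟨⟩) <;>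
      simp [*, collapseEquiv, deflate, collapse, toBlocks₁₁, toBlocks₂₂, u, v, s]
  rw [← charpoly_mul_mul_of_mul_eq_one hinv L, mul_assoc,
    ← charpoly_reindex (collapseEquiv w).symm, reindex_apply, Equiv.symm_symm, hblocks,
    charpoly_fromBlocks_zero₁₂]

theorem charpoly_eq_X_sub_C_mul_charpoly_deflate (A : Matrix α α R) (w : α) {r : R}
    (hrow : ∀ a, ∑ b, A a b = r) : A.charpoly = (X - C r) * (deflate A w).charpoly := by
  set L : Matrix (α ⊕ Empty) (α ⊕ Empty) R := fromBlocks A 0 0 0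
  have hL : L.collapse w = fromBlocks 0 0 0 (of fun _ _ => r) := by
    ext (i | i) (j | j) <;> first | exact i.elim | exact j.elim | simp [L, collapse, hrow]
  have hr : (of fun _ _ => r : Matrix Unit Unit R).charpoly = X - C r := by
    rw [charpoly_of_isUpperTriangular _ fun i j h => absurd h (by simp)]
    simp
  have h := charpoly_eq_charpoly_deflate_mul_charpoly_collapse L w (by simp [L, hrow]) (by simp)
  rw [hL] at h
  simpa [L, mul_comm, hr] using h

theorem roots_charpoly_deflate [IsDomain R] (A : Matrix α α R) (w : α) {r : R}
    (hrow : ∀ a, ∑ b, A a b = r) {lam : α → R} (hA : A.charpoly.roots = univ.val.map lam)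
    (hw : lam w = r) : (deflate A w).charpoly.roots = (univ.erase w).val.map lam := by
  rw [charpoly_eq_X_sub_C_mul_charpoly_deflate A w hrow,
    roots_mul ((monic_X_sub_C r).mul (charpoly_monic _)).ne_zero, roots_X_sub_C,
    ← insert_erase (mem_univ w), insert_val_of_notMem (notMem_erase w _), Multiset.map_cons,
    hw] at hA
  exact (Multiset.cons_inj_right r).mp hA

theorem roots_charpoly_smul_one_add [IsDomain R] (c : R) (B : Matrix α α R) :
    (c • (1 : Matrix α α R) + B).charpoly.roots = B.charpoly.roots.map (c + ·) := by
  have h : c • (1 : Matrix α α R) + B = B - scalar α (-c) := by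
    ext i j
    by_cases h : i = j <;> simp [h, add_comm]
  rw [h, charpoly_sub_scalar, ← one_mul X, ← C_1, roots_comp_C_mul_X_add_C _ _ _ isUnit_one]
  simp [add_comm]

end Matrix

section DistLaplacianBlocks

variable {R : Type*} [CommRing R] {V₁ V₂ V₃ : Type*} [Fintype V₁] [DecidableEq V₁]
  [Fintype V₂] [DecidableEq V₂] [Fintype V₃] [DecidableEq V₃]

def joinQuotientMatrix (n₁ n₂ n₃ : R) : Matrix (Fin 3) (Fin 3) R :=
  !![n₂ + n₃, -n₂, -n₃; -n₁, n₁ + 2 * n₃, -(2 * n₃); -n₁, -(2 * n₂), n₁ + 2 * n₂]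

theorem charpoly_joinQuotientMatrix (n₁ n₂ n₃ : R) :
    (joinQuotientMatrix n₁ n₂ n₃).charpoly =
      X * (X - C (n₁ + n₂ + n₃)) * (X - C (n₁ + 2 * n₂ + 2 * n₃)) := by
  simp only [joinQuotientMatrix, charpoly, charmatrix, det_fin_three]
  simp
  ring

def sumUnitsEquivFinThree : (Unit ⊕ Unit) ⊕ Unit ≃ Fin 3 where
  toFun
    | .inl (.inl _) => 0
    | .inl (.inr _) => 1
    | .inr _ => 2
  invFun := ![.inl (.inl ()), .inl (.inr ()), .inr ()]
  left_inv := by rintro ((⟨⟩ | ⟨⟩) | ⟨⟩) <;> rfl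
  right_inv := by intro i; fin_cases i <;> rfl

/-- The distance Laplacian of `G₁ ∇ (G₂ ∪ G₃)` in terms of the adjacency matrices `Aᵢ`, the
orders `nᵢ` and the degrees `rᵢ` of regular graphs `Gᵢ`. -/
def joinDistLaplacianBlocks (A₁ : Matrix V₁ V₁ R) (A₂ : Matrix V₂ V₂ R) (A₃ : Matrix V₃ V₃ R)
    (n₁ n₂ n₃ r₁ r₂ r₃ : R) : Matrix (V₁ ⊕ (V₂ ⊕ V₃)) (V₁ ⊕ (V₂ ⊕ V₃)) R :=
  fromBlocks ((2 * n₁ + n₂ + n₃ - r₁) • 1 + A₁ - of fun _ _ => 2) (of fun _ _ => -1)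
    (of fun _ _ => -1)
    (fromBlocks ((n₁ + 2 * n₂ + 2 * n₃ - r₂) • 1 + A₂ - of fun _ _ => 2) (of fun _ _ => -2)
      (of fun _ _ => -2) ((n₁ + 2 * n₂ + 2 * n₃ - r₃) • 1 + A₃ - of fun _ _ => 2))

theorem charpoly_joinDistLaplacianBlocks {A₁ : Matrix V₁ V₁ R} {A₂ : Matrix V₂ V₂ R}
    {A₃ : Matrix V₃ V₃ R} {n₁ n₂ n₃ r₁ r₂ r₃ : R} (hn₁ : (Fintype.card V₁ : R) = n₁)
    (hn₂ : (Fintype.card V₂ : R) = n₂) (hn₃ : (Fintype.card V₃ : R) = n₃)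
    (hrow₁ : ∀ a, ∑ b, A₁ a b = r₁) (hrow₂ : ∀ a, ∑ b, A₂ a b = r₂)
    (hrow₃ : ∀ a, ∑ b, A₃ a b = r₃) (w₁ : V₁) (w₂ : V₂) (w₃ : V₃) :
    (joinDistLaplacianBlocks A₁ A₂ A₃ n₁ n₂ n₃ r₁ r₂ r₃).charpoly =
      X * (X - C (n₁ + n₂ + n₃)) * (X - C (n₁ + 2 * n₂ + 2 * n₃))
        * ((2 * n₁ + n₂ + n₃ - r₁) • 1 + deflate A₁ w₁).charpoly
        * ((n₁ + 2 * n₂ + 2 * n₃ - r₂) • 1 + deflate A₂ w₂).charpoly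
        * ((n₁ + 2 * n₂ + 2 * n₃ - r₃) • 1 + deflate A₃ w₃).charpoly := by
  -- collapse `V₁`, `V₂`, `V₃` in turn, reassociating so that the next block comes first
  set L₁ := joinDistLaplacianBlocks A₁ A₂ A₃ n₁ n₂ n₃ r₁ r₂ r₃
  set L₂ := reindex (Equiv.sumAssoc V₂ V₃ Unit) (Equiv.sumAssoc V₂ V₃ Unit) (L₁.collapse w₁)
  set L₃ := reindex (Equiv.sumAssoc V₃ Unit Unit) (Equiv.sumAssoc V₃ Unit Unit) (L₂.collapse w₂)
  have h₁ := charpoly_eq_charpoly_deflate_mul_charpoly_collapse L₁ w₁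
    (by simp [L₁, joinDistLaplacianBlocks, sum_add_distrib, one_apply, hrow₁])
    (by simp [L₁, joinDistLaplacianBlocks])
  have h₂ := charpoly_eq_charpoly_deflate_mul_charpoly_collapse L₂ w₂
    (by simp [L₂, L₁, joinDistLaplacianBlocks, collapse, sum_add_distrib, one_apply, hrow₂])
    (by rintro a (b | ⟨⟩) <;> simp [L₂, L₁, joinDistLaplacianBlocks, collapse])
  have h₃ := charpoly_eq_charpoly_deflate_mul_charpoly_collapse L₃ w₃
    (by simp [L₃, L₂, L₁, joinDistLaplacianBlocks, collapse, toBlocks₂₂, sum_add_distrib,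
      one_apply, hrow₃])
    (by rintro a (⟨⟩ | ⟨⟩) <;> simp [L₃, L₂, L₁, joinDistLaplacianBlocks, collapse, toBlocks₂₂])
  have hL₁ : L₁.toBlocks₁₁ = (2 * n₁ + n₂ + n₃ - r₁) • 1 + A₁ - of fun _ _ => 2 := by
    simp [L₁, joinDistLaplacianBlocks]
  have hL₂ : L₂.toBlocks₁₁ = (n₁ + 2 * n₂ + 2 * n₃ - r₂) • 1 + A₂ - of fun _ _ => 2 := by
    ext
    simp [L₂, L₁, joinDistLaplacianBlocks, collapse, toBlocks₁₁]
  have hL₃ : L₃.toBlocks₁₁ = (n₁ + 2 * n₂ + 2 * n₃ - r₃) • 1 + A₃ - of fun _ _ => 2 := by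
    ext
    simp [L₃, L₂, L₁, joinDistLaplacianBlocks, collapse, toBlocks₁₁, toBlocks₂₂]
  have hquot : (L₃.collapse w₃).submatrix sumUnitsEquivFinThree.symm sumUnitsEquivFinThree.symm =
      joinQuotientMatrix n₁ n₂ n₃ := by
    ext i j
    fin_cases i <;> fin_cases j <;>
      simp [sumUnitsEquivFinThree, joinQuotientMatrix, L₃, L₂, L₁, joinDistLaplacianBlocks,
        collapse, toBlocks₂₂, sum_add_distrib, one_apply, hrow₁, hrow₂, hrow₃, hn₁, hn₂, hn₃] <;>
      ring
  rw [h₁, ← charpoly_reindex (Equiv.sumAssoc V₂ V₃ Unit), h₂,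
    ← charpoly_reindex (Equiv.sumAssoc V₃ Unit Unit), h₃, ← charpoly_reindex sumUnitsEquivFinThree,
    reindex_apply, hquot, charpoly_joinQuotientMatrix, hL₁, hL₂, hL₃,
    deflate_smul_one_add_sub_const, deflate_smul_one_add_sub_const, deflate_smul_one_add_sub_const]
  ring

end DistLaplacianBlocks

namespace SimpleGraph

variable {V : Type*}

theorem dist_eq_two_of_mem_commonNeighbors {G : SimpleGraph V} {u v m : V} (huv : u ≠ v)
    (hadj : ¬G.Adj u v) (hm : m ∈ G.commonNeighbors u v) : G.dist u v = 2 := by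
  have h : G.edist u v = 2 := edist_eq_two_iff.mpr ⟨huv, hadj, m, hm⟩
  have := (G.reachable_of_edist_ne_top (u := u) (v := v) (by simp [h])).coe_dist_eq_edist
  exact_mod_cast this.trans h

variable [Fintype V] (G : SimpleGraph V) [DecidableRel G.Adj]

theorem sum_adjMatrix_apply {R : Type*} [NonAssocSemiring R] (u : V) :
    ∑ v, G.adjMatrix R u v = G.degree u := by
  simp [adjMatrix_apply, degree_eq_sum_if_adj]

variable [DecidableEq V]

theorem distMatrix_eq_of_commonNeighbors_nonempty
    (hG : ∀ u v, u ≠ v → ¬G.Adj u v → (G.commonNeighbors u v).Nonempty) :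
    distMatrix G = (of fun _ _ => 2) - (2 : ℝ) • 1 - G.adjMatrix ℝ := by
  ext u v
  by_cases huv : u = v
  · simp [distMatrix, huv]
  by_cases hadj : G.Adj u v
  · simp [distMatrix, huv, hadj, dist_eq_one_iff_adj.mpr hadj]
    norm_num
  · obtain ⟨m, hm⟩ := hG u v huv hadj
    simp [distMatrix, huv, hadj, dist_eq_two_of_mem_commonNeighbors huv hadj hm]

theorem distLaplacian_eq_of_commonNeighbors_nonempty
    (hG : ∀ u v, u ≠ v → ¬G.Adj u v → (G.commonNeighbors u v).Nonempty) :
    distLaplacian G = (2 * Fintype.card V : ℝ) • 1 - (of fun _ _ => 2) - G.lapMatrix ℝ := by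
  have hD := distMatrix_eq_of_commonNeighbors_nonempty G hG
  have htr : ∀ u, transmission G u = 2 * Fintype.card V - 2 - G.degree u := fun u => by
    change ∑ v, distMatrix G u v = _
    simp only [hD, Matrix.sub_apply, of_apply, Matrix.smul_apply, sum_sub_distrib,
      sum_adjMatrix_apply]
    simp [one_apply]
    ring
  ext u v
  by_cases huv : u = v
  · subst huv
    simp [distLaplacian, htr, hD, lapMatrix, degMatrix]
  · simp [distLaplacian, hD, huv, lapMatrix, degMatrix]
    ring

end SimpleGraph

section Join

variable {V W : Type*} (G : SimpleGraph V) (H : SimpleGraph W)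

instance [DecidableRel G.Adj] [DecidableRel H.Adj] : DecidableRel (joinGraph G H).Adj
  | .inl a, .inl b => inferInstanceAs (Decidable (G.Adj a b))
  | .inl _, .inr _ => isTrue trivial
  | .inr _, .inl _ => isTrue trivial
  | .inr x, .inr y => inferInstanceAs (Decidable (H.Adj x y))

instance [DecidableRel G.Adj] [DecidableRel H.Adj] : DecidableRel (disjUnionGraph G H).Adj
  | .inl a, .inl b => inferInstanceAs (Decidable (G.Adj a b))
  | .inl _, .inr _ => isFalse id
  | .inr _, .inl _ => isFalse id
  | .inr x, .inr y => inferInstanceAs (Decidable (H.Adj x y))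

@[simp] theorem joinGraph_adj_inl_inl {a b : V} :
    (joinGraph G H).Adj (.inl a) (.inl b) ↔ G.Adj a b :=
  Iff.rfl

@[simp] theorem joinGraph_adj_inl_inr {a : V} {y : W} : (joinGraph G H).Adj (.inl a) (.inr y) :=
  trivial

@[simp] theorem joinGraph_adj_inr_inl {x : W} {b : V} : (joinGraph G H).Adj (.inr x) (.inl b) :=
  trivial

@[simp] theorem joinGraph_adj_inr_inr {x y : W} :
    (joinGraph G H).Adj (.inr x) (.inr y) ↔ H.Adj x y :=
  Iff.rfl

@[simp] theorem disjUnionGraph_adj_inl_inl {a b : V} :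
    (disjUnionGraph G H).Adj (.inl a) (.inl b) ↔ G.Adj a b :=
  Iff.rfl

@[simp] theorem disjUnionGraph_adj_inl_inr {a : V} {y : W} :
    ¬(disjUnionGraph G H).Adj (.inl a) (.inr y) :=
  id

@[simp] theorem disjUnionGraph_adj_inr_inl {x : W} {b : V} :
    ¬(disjUnionGraph G H).Adj (.inr x) (.inl b) :=
  id

@[simp] theorem disjUnionGraph_adj_inr_inr {x y : W} :
    (disjUnionGraph G H).Adj (.inr x) (.inr y) ↔ H.Adj x y :=
  Iff.rfl

theorem joinGraph_commonNeighbors_nonempty [Nonempty V] [Nonempty W] :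
    ∀ u v, u ≠ v → ¬(joinGraph G H).Adj u v → ((joinGraph G H).commonNeighbors u v).Nonempty := by
  rintro (a | x) (b | y) - hadj
  · obtain ⟨y⟩ := ‹Nonempty W›
    exact ⟨.inr y, trivial, trivial⟩
  · exact absurd trivial hadj
  · exact absurd trivial hadj
  · obtain ⟨a⟩ := ‹Nonempty V›
    exact ⟨.inl a, trivial, trivial⟩

variable [Fintype V] [Fintype W] [DecidableRel G.Adj] [DecidableRel H.Adj]

theorem joinGraph_degree_inl (a : V) :
    (joinGraph G H).degree (.inl a) = G.degree a + Fintype.card W := by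
  rw [← Nat.cast_id (G.degree a), ← G.sum_adjMatrix_apply, ← Nat.cast_id (SimpleGraph.degree _ _),
    ← SimpleGraph.sum_adjMatrix_apply, Fintype.sum_sum_type]
  simp [SimpleGraph.adjMatrix_apply]

theorem joinGraph_degree_inr (x : W) :
    (joinGraph G H).degree (.inr x) = H.degree x + Fintype.card V := by
  rw [← Nat.cast_id (H.degree x), ← H.sum_adjMatrix_apply, ← Nat.cast_id (SimpleGraph.degree _ _),
    ← SimpleGraph.sum_adjMatrix_apply, Fintype.sum_sum_type]
  simp [SimpleGraph.adjMatrix_apply, add_comm]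

theorem disjUnionGraph_degree_inl (a : V) :
    (disjUnionGraph G H).degree (.inl a) = G.degree a := by
  rw [← Nat.cast_id (G.degree a), ← G.sum_adjMatrix_apply, ← Nat.cast_id (SimpleGraph.degree _ _),
    ← SimpleGraph.sum_adjMatrix_apply, Fintype.sum_sum_type]
  simp [SimpleGraph.adjMatrix_apply]

theorem disjUnionGraph_degree_inr (x : W) :
    (disjUnionGraph G H).degree (.inr x) = H.degree x := by
  rw [← Nat.cast_id (H.degree x), ← H.sum_adjMatrix_apply, ← Nat.cast_id (SimpleGraph.degree _ _),
    ← SimpleGraph.sum_adjMatrix_apply, Fintype.sum_sum_type]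
  simp [SimpleGraph.adjMatrix_apply]

end Join

theorem distLaplacian_joinGraph_disjUnionGraph {V₁ V₂ V₃ : Type*} [Fintype V₁] [DecidableEq V₁]
    [Fintype V₂] [DecidableEq V₂] [Fintype V₃] [DecidableEq V₃] [Nonempty V₁]
    [Nonempty (V₂ ⊕ V₃)] {G₁ : SimpleGraph V₁} {G₂ : SimpleGraph V₂} {G₃ : SimpleGraph V₃}
    [DecidableRel G₁.Adj] [DecidableRel G₂.Adj] [DecidableRel G₃.Adj] {r₁ r₂ r₃ : ℕ}
    (hreg₁ : G₁.IsRegularOfDegree r₁) (hreg₂ : G₂.IsRegularOfDegree r₂)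
    (hreg₃ : G₃.IsRegularOfDegree r₃) :
    distLaplacian (joinGraph G₁ (disjUnionGraph G₂ G₃)) =
      joinDistLaplacianBlocks (G₁.adjMatrix ℝ) (G₂.adjMatrix ℝ) (G₃.adjMatrix ℝ)
        (Fintype.card V₁) (Fintype.card V₂) (Fintype.card V₃) r₁ r₂ r₃ := by
  rw [SimpleGraph.distLaplacian_eq_of_commonNeighbors_nonempty _
    (joinGraph_commonNeighbors_nonempty _ _)]
  ext (a | x | y) (b | x' | y') <;>
    simp [joinDistLaplacianBlocks, SimpleGraph.lapMatrix, SimpleGraph.degMatrix,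
      joinGraph_degree_inl, joinGraph_degree_inr, disjUnionGraph_degree_inl,
      disjUnionGraph_degree_inr, hreg₁ _, hreg₂ _, hreg₃ _, one_apply, diagonal_apply,
      SimpleGraph.adjMatrix_apply] <;>
    (try split_ifs) <;> ring

theorem stmt8 {V₁ V₂ V₃ : Type*} [Fintype V₁] [DecidableEq V₁] [Fintype V₂] [DecidableEq V₂]
    [Fintype V₃] [DecidableEq V₃]
    (G₁ : SimpleGraph V₁) (G₂ : SimpleGraph V₂) (G₃ : SimpleGraph V₃)
    [DecidableRel G₁.Adj] [DecidableRel G₂.Adj] [DecidableRel G₃.Adj]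
    (n₁ n₂ n₃ : ℕ) (hn₁ : Fintype.card V₁ = n₁) (hn₂ : Fintype.card V₂ = n₂)
    (hn₃ : Fintype.card V₃ = n₃)
    (r₁ r₂ r₃ : ℕ) (hreg₁ : G₁.IsRegularOfDegree r₁) (hreg₂ : G₂.IsRegularOfDegree r₂)
    (hreg₃ : G₃.IsRegularOfDegree r₃)
    (lam : V₁ → ℝ) (mu : V₂ → ℝ) (del : V₃ → ℝ)
    (hlam : (G₁.adjMatrix ℝ).charpoly.roots = Finset.univ.val.map lam)
    (hmu : (G₂.adjMatrix ℝ).charpoly.roots = Finset.univ.val.map mu)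
    (hdel : (G₃.adjMatrix ℝ).charpoly.roots = Finset.univ.val.map del)
    (w₁ : V₁) (hw₁ : lam w₁ = r₁) (w₂ : V₂) (hw₂ : mu w₂ = r₂) (w₃ : V₃) (hw₃ : del w₃ = r₃) :
    (distLaplacian (joinGraph G₁ (disjUnionGraph G₂ G₃))).charpoly.roots =
      ({0, (n₁ : ℝ) + (n₂ : ℝ) + (n₃ : ℝ),
        (n₁ : ℝ) + 2 * (n₂ : ℝ) + 2 * (n₃ : ℝ)} : Multiset ℝ)
      + ((Finset.univ.erase w₁).val.map fun v =>
          2 * (n₁ : ℝ) + (n₂ : ℝ) + (n₃ : ℝ) - (r₁ : ℝ) + lam v)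
      + ((Finset.univ.erase w₂).val.map fun v =>
          (n₁ : ℝ) + 2 * (n₂ : ℝ) + 2 * (n₃ : ℝ) - (r₂ : ℝ) + mu v)
      + ((Finset.univ.erase w₃).val.map fun v =>
          (n₁ : ℝ) + 2 * (n₂ : ℝ) + 2 * (n₃ : ℝ) - (r₃ : ℝ) + del v) := by
  subst hn₁ hn₂ hn₃
  have : Nonempty V₁ := ⟨w₁⟩
  have : Nonempty (V₂ ⊕ V₃) := ⟨.inl w₂⟩
  have hrow₁ a : ∑ b, G₁.adjMatrix ℝ a b = r₁ := by rw [G₁.sum_adjMatrix_apply, hreg₁ a]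
  have hrow₂ a : ∑ b, G₂.adjMatrix ℝ a b = r₂ := by rw [G₂.sum_adjMatrix_apply, hreg₂ a]
  have hrow₃ a : ∑ b, G₃.adjMatrix ℝ a b = r₃ := by rw [G₃.sum_adjMatrix_apply, hreg₃ a]
  rw [distLaplacian_joinGraph_disjUnionGraph hreg₁ hreg₂ hreg₃,
    charpoly_joinDistLaplacianBlocks rfl rfl rfl hrow₁ hrow₂ hrow₃ w₁ w₂ w₃]
  simp only [roots_mul, mul_ne_zero_iff, ne_eq, X_ne_zero, X_sub_C_ne_zero, Monic.ne_zero,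
    charpoly_monic, not_false_eq_true, and_self, roots_X, roots_X_sub_C,
    roots_charpoly_smul_one_add, roots_charpoly_deflate _ _ hrow₁ hlam hw₁,
    roots_charpoly_deflate _ _ hrow₂ hmu hw₂, roots_charpoly_deflate _ _ hrow₃ hdel hw₃,
    Multiset.map_map, Function.comp_def]
  rfl
end

section
/- Let G be a simple connected graph on n ≥ 2 vertices and let 0 ≤ α ≤ 1. Then the generalized distance spectral radius satisfies ρ(G) ≥ (α·Tr_min + √(α²·Tr_min² + 4(1 − α)·T_min))/2, where Tr_min is the minimum transmission degree and T_min is the minimum second transmission degree of G. Moreover, equality holds if and only if G is transmission regular. -/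
open Finset

/-!
Replacing an eigenvector `v` of `D_α` for its largest eigenvalue `ρ` by `|v|` gives an
eigenvector `y ≥ 0`; for `α < 1` all off-diagonal entries are positive, so `y > 0`. At a vertex `p` where `y` is minimal, the eigen-equation gives
`ρ y_j ≥ Tr_j y_p` for every `j`, and applying it twice at `p` gives
`ρ² ≥ α Tr_p ρ + (1 - α) T_p ≥ α Tr_min ρ + (1 - α) T_min`, i.e. `ρ` is at least the larger root
of the quadratic. If equality holds, all these inequalities are tight, which forces `y` to be
constant as soon as `n ≥ 3`, so `Tr ≡ ρ`; for `n = 2` every graph is transmission regular.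
Conversely, if `Tr ≡ k` then the all-ones vector shows `ρ = k`, and `T ≡ k²`.
For `α = 1`, `D_α` is the diagonal matrix of transmissions.
-/

namespace Matrix

variable {W : Type*} [Fintype W] {A : Matrix W W ℝ}

lemma dotProduct_mulVec_le_abs (hnn : ∀ u w, 0 ≤ A u w) (v : W → ℝ) :
    v ⬝ᵥ (A *ᵥ v) ≤ |v| ⬝ᵥ (A *ᵥ |v|) := by
  simp only [dotProduct, mulVec, Finset.mul_sum, Pi.abs_apply]
  refine Finset.sum_le_sum fun u _ => Finset.sum_le_sum fun w _ => ?_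
  calc v u * (A u w * v w) ≤ |v u * (A u w * v w)| := le_abs_self _
    _ = |v u| * (A u w * |v w|) := by rw [abs_mul, abs_mul, abs_of_nonneg (hnn u w)]

lemma pos_of_mulVec_eq_smul (hnn : ∀ u w, 0 ≤ A u w) (hoff : ∀ u w, u ≠ w → 0 < A u w)
    {y : W → ℝ} {r : ℝ} (hy0 : 0 ≤ y) (hy : y ≠ 0) (hAy : A *ᵥ y = r • y) (u : W) :
    0 < y u := by
  refine (hy0 u).lt_of_ne fun hu => hy (funext fun w => ?_)
  have hsum : ∑ x, A u x * y x = 0 := by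
    simpa [← hu, mulVec, dotProduct] using congrFun hAy u
  obtain rfl | huw := eq_or_ne u w
  · exact hu.symm
  have := (Finset.sum_eq_zero_iff_of_nonneg fun x _ => mul_nonneg (hnn u x) (hy0 x)).mp hsum w
    (Finset.mem_univ w)
  exact (mul_eq_zero.mp this).resolve_left (hoff u w huw).ne'

lemma exists_le_sum_row_of_mulVec_eq_smul (hnn : ∀ u w, 0 ≤ A u w)
    {y : W → ℝ} {r : ℝ} (hy0 : 0 ≤ y) (hy : y ≠ 0) (hAy : A *ᵥ y = r • y) :
    ∃ q, r ≤ ∑ w, A q w := by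
  obtain ⟨w, hw⟩ := Function.ne_iff.mp hy
  obtain ⟨q, -, hq⟩ := Finset.exists_max_image Finset.univ y ⟨w, Finset.mem_univ w⟩
  have hyq : 0 < y q := ((hy0 w).lt_of_ne' hw).trans_le (hq w (Finset.mem_univ w))
  refine ⟨q, le_of_mul_le_mul_right ?_ hyq⟩
  calc r * y q = ∑ w, A q w * y w := by simpa [mulVec, dotProduct] using (congrFun hAy q).symm
    _ ≤ ∑ w, A q w * y q :=
      Finset.sum_le_sum fun w _ => mul_le_mul_of_nonneg_left (hq w (Finset.mem_univ w)) (hnn q w)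
    _ = (∑ w, A q w) * y q := (Finset.sum_mul ..).symm

variable [DecidableEq W]

lemma mem_spectrum_of_mulVec_eq_smul {z : W → ℝ} {r : ℝ} (hz : A *ᵥ z = r • z) (hz0 : z ≠ 0) :
    r ∈ spectrum ℝ A := by
  rw [← spectrum_toLin', ← Module.End.hasEigenvalue_iff_mem_spectrum]
  exact Module.End.hasEigenvalue_of_hasEigenvector
    ⟨Module.End.mem_eigenspace_iff.mpr (by simpa using hz), hz0⟩

lemma exists_mulVec_eq_smul_of_mem_spectrum {r : ℝ} (hr : r ∈ spectrum ℝ A) :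
    ∃ z ≠ 0, A *ᵥ z = r • z := by
  rw [← spectrum_toLin', ← Module.End.hasEigenvalue_iff_mem_spectrum] at hr
  obtain ⟨z, hz, hz0⟩ := hr.exists_hasEigenvector
  exact ⟨z, hz0, by simpa using Module.End.mem_eigenspace_iff.mp hz⟩

lemma le_sSup_spectrum {r : ℝ} (hr : r ∈ spectrum ℝ A) : r ≤ sSup (spectrum ℝ A) :=
  le_csSup A.finite_real_spectrum.bddAbove hr

namespace IsHermitian

lemma sSup_spectrum_mem [Nonempty W] (hA : A.IsHermitian) :
    sSup (spectrum ℝ A) ∈ spectrum ℝ A :=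
  Set.Nonempty.csSup_mem (hA.spectrum_real_eq_range_eigenvalues ▸ Set.range_nonempty _)
    A.finite_real_spectrum

lemma posSemidef_algebraMap_sSup_spectrum_sub (hA : A.IsHermitian) :
    (algebraMap ℝ (Matrix W W ℝ) (sSup (spectrum ℝ A)) - A).PosSemidef := by
  refine posSemidef_iff_isHermitian_and_spectrum_nonneg.mpr
    ⟨(isHermitian_diagonal _).sub hA, ?_⟩
  rw [← spectrum.singleton_sub_eq]
  rintro _ ⟨_, rfl, r, hr, rfl⟩
  exact sub_nonneg.mpr (le_sSup_spectrum hr)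

lemma exists_nonneg_eigenvector [Nonempty W] (hA : A.IsHermitian) (hnn : ∀ u w, 0 ≤ A u w) :
    ∃ y, 0 ≤ y ∧ y ≠ 0 ∧ A *ᵥ y = sSup (spectrum ℝ A) • y := by
  set ρ := sSup (spectrum ℝ A)
  -- `|v| ⬝ᵥ (ρ - A) *ᵥ |v| ≤ v ⬝ᵥ (ρ - A) *ᵥ v = 0` and `ρ - A` is positive semidefinite,
  -- so `|v|` lies in its kernel.
  obtain ⟨v, hv0, hv⟩ := exists_mulVec_eq_smul_of_mem_spectrum hA.sSup_spectrum_mem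
  refine ⟨|v|, abs_nonneg v, by simpa using hv0, ?_⟩
  have hB := hA.posSemidef_algebraMap_sSup_spectrum_sub
  have hBv : |v| ⬝ᵥ ((algebraMap ℝ _ ρ - A) *ᵥ |v|) ≤ 0 := by
    have habs : v ⬝ᵥ (A *ᵥ v) ≤ |v| ⬝ᵥ (A *ᵥ |v|) := dotProduct_mulVec_le_abs hnn v
    have hvv : |v| ⬝ᵥ |v| = v ⬝ᵥ v := by simp [dotProduct, Pi.abs_apply, abs_mul_abs_self]
    rw [hv, dotProduct_smul, smul_eq_mul] at habs
    rw [Algebra.algebraMap_eq_smul_one, sub_mulVec, smul_mulVec, one_mulVec, dotProduct_sub,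
      dotProduct_smul, smul_eq_mul, hvv]
    linarith
  have hzero := (hB.dotProduct_mulVec_zero_iff |v|).mp (by
    simpa using le_antisymm hBv (by simpa using hB.dotProduct_mulVec_nonneg |v|))
  rw [sub_mulVec, sub_eq_zero] at hzero
  rw [← hzero, Algebra.algebraMap_eq_smul_one, smul_mulVec, one_mulVec]

end IsHermitian

end Matrix

lemma half_add_sqrt_eq_iff {b c ρ : ℝ} (hb : b ≤ 2 * ρ) (hd : 0 ≤ b ^ 2 + 4 * c) :
    (b + √(b ^ 2 + 4 * c)) / 2 = ρ ↔ ρ ^ 2 = b * ρ + c := by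
  rw [← sub_eq_zero, show (b + √(b ^ 2 + 4 * c)) / 2 - ρ = (√(b ^ 2 + 4 * c) - (2 * ρ - b)) / 2 by
    ring, div_eq_zero_iff, or_iff_left two_ne_zero, sub_eq_zero,
    Real.sqrt_eq_iff_eq_sq hd (by linarith)]
  constructor <;> intro h <;> linarith

lemma half_add_sqrt_le {b c ρ : ℝ} (hb : b ≤ 2 * ρ) (h : b * ρ + c ≤ ρ ^ 2) :
    (b + √(b ^ 2 + 4 * c)) / 2 ≤ ρ := by
  have : √(b ^ 2 + 4 * c) ≤ 2 * ρ - b := Real.sqrt_le_iff.mpr ⟨by linarith, by nlinarith⟩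
  linarith

section GenDistMatrix

variable {V : Type*} [Fintype V] (G : SimpleGraph V)

lemma transmission_nonneg (u : V) : 0 ≤ transmission G u :=
  sum_nonneg fun _ _ => Nat.cast_nonneg _

lemma secondTransmission_nonneg (u : V) : 0 ≤ secondTransmission G u :=
  sum_nonneg fun v _ => mul_nonneg (Nat.cast_nonneg _) (transmission_nonneg G v)

def IsTransmissionRegular : Prop := ∃ k, ∀ u, transmission G u = k

lemma isTransmissionRegular_of_card_eq_two (h : Fintype.card V = 2) : IsTransmissionRegular G := by
  classical
  obtain ⟨x, y, hxy, huniv⟩ := Finset.card_eq_two.mp h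
  have htr : ∀ u, transmission G u = (G.dist u x : ℝ) + G.dist u y := fun u => by
    rw [transmission, huniv, Finset.sum_pair hxy]
  refine ⟨G.dist x y, fun u => ?_⟩
  have hu : u = x ∨ u = y := by simpa [huniv] using Finset.mem_univ u
  rcases hu with rfl | rfl <;> simp [htr, SimpleGraph.dist_comm]

variable {G}

lemma secondTransmission_eq_sq {k : ℝ} (hk : ∀ u, transmission G u = k) (u : V) :
    secondTransmission G u = k ^ 2 := by
  simp only [secondTransmission, hk, ← Finset.sum_mul]
  rw [← transmission, hk, sq]

lemma SimpleGraph.Connected.eq_zero_of_sum_dist_mul_eq_zero (hG : G.Connected) {f : V → ℝ}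
    (hf : ∀ w, 0 ≤ f w) {j : V} (h : ∑ w, G.dist j w * f w = 0) {w : V} (hw : w ≠ j) :
    f w = 0 := by
  have hterm := (Finset.sum_eq_zero_iff_of_nonneg fun x _ =>
    mul_nonneg (Nat.cast_nonneg _) (hf x)).mp h w (Finset.mem_univ w)
  have hd : (0 : ℝ) < G.dist j w := by exact_mod_cast hG.pos_dist_of_ne hw.symm
  exact (mul_eq_zero.mp hterm).resolve_left hd.ne'

open Matrix

variable [DecidableEq V]

lemma genDistMatrix_mulVec_apply (a : ℝ) (x : V → ℝ) (u : V) :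
    (genDistMatrix a G *ᵥ x) u
      = a * (transmission G u * x u) + (1 - a) * ∑ v, G.dist u v * x v := by
  rw [genDistMatrix, add_mulVec, smul_mulVec, smul_mulVec]
  simp only [Pi.add_apply, Pi.smul_apply, mulVec_diagonal, smul_eq_mul]
  simp only [mulVec, dotProduct, distMatrix, of_apply]

lemma genDistMatrix_mulVec_const (a c : ℝ) :
    genDistMatrix a G *ᵥ (fun _ => c) = fun u => transmission G u * c := by
  ext u
  rw [genDistMatrix_mulVec_apply, ← Finset.sum_mul, ← transmission]
  ring

lemma sum_genDistMatrix_apply (a : ℝ) (u : V) : ∑ w, genDistMatrix a G u w = transmission G u := by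
  simpa [Matrix.mulVec, dotProduct] using congrFun (genDistMatrix_mulVec_const (G := G) a 1) u

lemma genDistMatrix_isHermitian (a : ℝ) : (genDistMatrix a G).IsHermitian := by
  ext u v
  simp only [Matrix.conjTranspose_apply, star_trivial, genDistMatrix, distMatrix, Matrix.add_apply,
    Matrix.smul_apply, Matrix.diagonal_apply, Matrix.of_apply, SimpleGraph.dist_comm]
  by_cases h : u = v <;> simp [h, eq_comm]

lemma genDistMatrix_nonneg {a : ℝ} (ha0 : 0 ≤ a) (ha1 : a ≤ 1) (u v : V) :
    0 ≤ genDistMatrix a G u v := by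
  have := transmission_nonneg G u
  simp only [genDistMatrix, distMatrix, Matrix.add_apply, Matrix.smul_apply, Matrix.diagonal_apply,
    Matrix.of_apply, smul_eq_mul]
  split_ifs <;> nlinarith [(Nat.cast_nonneg (G.dist u v) : (0 : ℝ) ≤ _)]

lemma genDistMatrix_pos_of_ne {a : ℝ} (ha1 : a < 1) (hG : G.Connected) {u v : V} (huv : u ≠ v) :
    0 < genDistMatrix a G u v := by
  have : (0 : ℝ) < G.dist u v := by exact_mod_cast hG.pos_dist_of_ne huv
  simp only [genDistMatrix, distMatrix, Matrix.add_apply, Matrix.smul_apply,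
    Matrix.diagonal_apply_ne _ huv, Matrix.of_apply, smul_eq_mul]
  nlinarith

section MinimalEntry

variable {a ρ : ℝ} {y : V → ℝ} {p : V}

lemma genDistMatrix_eigen_apply (hy : genDistMatrix a G *ᵥ y = ρ • y) (u : V) :
    ρ * y u = a * (transmission G u * y u) + (1 - a) * ∑ v, G.dist u v * y v := by
  rw [← genDistMatrix_mulVec_apply, hy, Pi.smul_apply, smul_eq_mul]

lemma mul_sub_transmission_mul_eq (hy : genDistMatrix a G *ᵥ y = ρ • y) (j : V) (c : ℝ) :
    ρ * y j - transmission G j * c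
      = a * (transmission G j * (y j - c)) + (1 - a) * ∑ w, G.dist j w * (y w - c) := by
  have htr : ∑ w, (G.dist j w : ℝ) * c = transmission G j * c := by
    rw [transmission, Finset.sum_mul]
  rw [genDistMatrix_eigen_apply hy j]
  simp only [mul_sub, Finset.sum_sub_distrib, htr]
  ring

lemma sq_mul_eq_secondTransmission_add (hy : genDistMatrix a G *ᵥ y = ρ • y) (p : V) (c : ℝ) :
    ρ ^ 2 * y p = a * transmission G p * ρ * y p + (1 - a) * (secondTransmission G p * c)
      + (1 - a) * ∑ w, G.dist p w * (ρ * y w - transmission G w * c) := by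
  have hsum : ∑ w, G.dist p w * (ρ * y w - transmission G w * c)
      = ρ * ∑ w, G.dist p w * y w - secondTransmission G p * c := by
    rw [secondTransmission, Finset.mul_sum, Finset.sum_mul, ← Finset.sum_sub_distrib]
    exact Finset.sum_congr rfl fun w _ => by ring
  rw [hsum, sq, mul_assoc, genDistMatrix_eigen_apply hy p]
  ring

lemma transmission_mul_le_mul (ha0 : 0 ≤ a) (ha1 : a ≤ 1) (hy : genDistMatrix a G *ᵥ y = ρ • y)
    (hmin : ∀ w, y p ≤ y w) (j : V) : transmission G j * y p ≤ ρ * y j := by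
  have hdiag : 0 ≤ a * (transmission G j * (y j - y p)) :=
    mul_nonneg ha0 (mul_nonneg (transmission_nonneg G j) (sub_nonneg.mpr (hmin j)))
  have hoff : 0 ≤ (1 - a) * ∑ w, (G.dist j w : ℝ) * (y w - y p) :=
    mul_nonneg (sub_nonneg.mpr ha1)
      (sum_nonneg fun w _ => mul_nonneg (Nat.cast_nonneg _) (sub_nonneg.mpr (hmin w)))
  linarith [mul_sub_transmission_mul_eq hy j (y p)]

lemma quadratic_le_sq (ha0 : 0 ≤ a) (ha1 : a ≤ 1) (hy : genDistMatrix a G *ᵥ y = ρ • y)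
    (hmin : ∀ w, y p ≤ y w) (hyp : 0 < y p) :
    a * transmission G p * ρ + (1 - a) * secondTransmission G p ≤ ρ ^ 2 := by
  have hgap : 0 ≤ (1 - a) * ∑ w, G.dist p w * (ρ * y w - transmission G w * y p) :=
    mul_nonneg (sub_nonneg.mpr ha1) (sum_nonneg fun w _ => mul_nonneg (Nat.cast_nonneg _)
      (sub_nonneg.mpr (transmission_mul_le_mul ha0 ha1 hy hmin w)))
  refine le_of_mul_le_mul_right ?_ hyp
  linarith [sq_mul_eq_secondTransmission_add hy p (y p)]

lemma mul_eq_transmission_mul_of_quadratic_eq_sq (ha0 : 0 ≤ a) (ha1 : a < 1) (hG : G.Connected)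
    (hy : genDistMatrix a G *ᵥ y = ρ • y) (hmin : ∀ w, y p ≤ y w)
    (heq : a * transmission G p * ρ + (1 - a) * secondTransmission G p = ρ ^ 2)
    {w : V} (hw : w ≠ p) : ρ * y w = transmission G w * y p := by
  have hsum : ∑ w, G.dist p w * (ρ * y w - transmission G w * y p) = 0 := by
    have h := sq_mul_eq_secondTransmission_add hy p (y p)
    rw [← heq] at h
    exact (mul_eq_zero.mp (by linarith : (1 - a) * _ = 0)).resolve_left (by linarith)
  have := hG.eq_zero_of_sum_dist_mul_eq_zero
    (fun w => sub_nonneg.mpr (transmission_mul_le_mul ha0 ha1.le hy hmin w)) hsum hw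
  linarith

lemma eq_of_mul_eq_transmission_mul (ha0 : 0 ≤ a) (ha1 : a < 1) (hG : G.Connected)
    (hy : genDistMatrix a G *ᵥ y = ρ • y) (hmin : ∀ w, y p ≤ y w) {j : V}
    (hj : ρ * y j = transmission G j * y p) {x : V} (hx : x ≠ j) : y x = y p := by
  have hdiag : 0 ≤ a * (transmission G j * (y j - y p)) :=
    mul_nonneg ha0 (mul_nonneg (transmission_nonneg G j) (sub_nonneg.mpr (hmin j)))
  have hoff : 0 ≤ ∑ w, (G.dist j w : ℝ) * (y w - y p) :=
    sum_nonneg fun w _ => mul_nonneg (Nat.cast_nonneg _) (sub_nonneg.mpr (hmin w))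
  have hsum : ∑ w, (G.dist j w : ℝ) * (y w - y p) = 0 := by
    have h := mul_sub_transmission_mul_eq hy j (y p)
    rw [hj, sub_self] at h
    exact le_antisymm (nonpos_of_mul_nonpos_right (by linarith) (sub_pos.mpr ha1)) hoff
  linarith [hG.eq_zero_of_sum_dist_mul_eq_zero (fun w => sub_nonneg.mpr (hmin w)) hsum hx]

lemma isTransmissionRegular_of_quadratic_eq_sq (ha0 : 0 ≤ a) (ha1 : a < 1) (hG : G.Connected)
    (hy : genDistMatrix a G *ᵥ y = ρ • y) (hmin : ∀ w, y p ≤ y w) (hyp : 0 < y p)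
    (heq : a * transmission G p * ρ + (1 - a) * secondTransmission G p = ρ ^ 2)
    (hcard : 3 ≤ Fintype.card V) : IsTransmissionRegular G := by
  have hconst : y = fun _ => y p := by
    ext x
    obtain ⟨j, -, hj⟩ := Finset.exists_mem_notMem_of_card_lt_card
      (lt_of_lt_of_le ((Finset.card_le_two (a := p) (b := x)).trans_lt (by omega)) hcard :
        ({p, x} : Finset V).card < Finset.univ.card)
    simp only [Finset.mem_insert, Finset.mem_singleton, not_or] at hj
    exact eq_of_mul_eq_transmission_mul ha0 ha1 hG hy hmin
      (mul_eq_transmission_mul_of_quadratic_eq_sq ha0 ha1 hG hy hmin heq hj.1) (Ne.symm hj.2)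
  refine ⟨ρ, fun u => mul_right_cancel₀ hyp.ne' ?_⟩
  have := congrFun hy u
  rw [hconst, genDistMatrix_mulVec_const] at this
  simpa using this

end MinimalEntry

lemma genDistMatrix_one : genDistMatrix 1 G = diagonal (transmission G) := by
  simp [genDistMatrix]

section SpectralRadius

variable {a : ℝ}

lemma sSup_spectrum_genDistMatrix_eq_of_transmission_eq [Nonempty V] (ha0 : 0 ≤ a) (ha1 : a ≤ 1)
    {k : ℝ} (hk : ∀ u, transmission G u = k) : sSup (spectrum ℝ (genDistMatrix a G)) = k := by
  have hnn := genDistMatrix_nonneg (G := G) ha0 ha1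
  refine le_antisymm ?_ (le_sSup_spectrum (mem_spectrum_of_mulVec_eq_smul (z := fun _ => 1) ?_ ?_))
  · obtain ⟨y, hy0, hy, hMy⟩ := (genDistMatrix_isHermitian a).exists_nonneg_eigenvector hnn
    obtain ⟨q, hq⟩ := exists_le_sum_row_of_mulVec_eq_smul hnn hy0 hy hMy
    rwa [sum_genDistMatrix_apply, hk] at hq
  · ext u
    simp [genDistMatrix_mulVec_const, hk]
  · exact fun h => one_ne_zero (congrFun h (Classical.arbitrary V))

lemma exists_pos_eigenvector_genDistMatrix (ha0 : 0 ≤ a) (ha1 : a < 1) (hG : G.Connected) :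
    ∃ (y : V → ℝ) (p : V), 0 < y p ∧ (∀ w, y p ≤ y w) ∧
      genDistMatrix a G *ᵥ y = sSup (spectrum ℝ (genDistMatrix a G)) • y := by
  have := hG.nonempty
  have hnn := genDistMatrix_nonneg (G := G) ha0 ha1.le
  obtain ⟨y, hy0, hy, hMy⟩ := (genDistMatrix_isHermitian a).exists_nonneg_eigenvector hnn
  obtain ⟨p, -, hp⟩ := Finset.exists_min_image Finset.univ y Finset.univ_nonempty
  exact ⟨y, p, pos_of_mulVec_eq_smul hnn (fun _ _ => genDistMatrix_pos_of_ne ha1 hG) hy0 hy hMy p,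
    fun w => hp w (Finset.mem_univ w), hMy⟩

variable {t s : ℝ}

lemma quadratic_le_sq_sSup_spectrum_genDistMatrix (ha0 : 0 ≤ a) (ha1 : a ≤ 1) (hG : G.Connected)
    (ht : 0 ≤ t) (hTr : ∀ u, t ≤ transmission G u) (hT : ∀ u, s ≤ secondTransmission G u) :
    t ≤ sSup (spectrum ℝ (genDistMatrix a G)) ∧
      a * t * sSup (spectrum ℝ (genDistMatrix a G)) + (1 - a) * s
        ≤ sSup (spectrum ℝ (genDistMatrix a G)) ^ 2 := by
  set ρ := sSup (spectrum ℝ (genDistMatrix a G))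
  rcases ha1.eq_or_lt with rfl | ha1
  · obtain ⟨u⟩ := hG.nonempty
    have htρ : t ≤ ρ := (hTr u).trans (le_sSup_spectrum (by simp [genDistMatrix_one]))
    exact ⟨htρ, by nlinarith⟩
  · obtain ⟨y, p, hyp, hmin, hy⟩ := exists_pos_eigenvector_genDistMatrix ha0 ha1 hG
    have hpρ : transmission G p ≤ ρ :=
      le_of_mul_le_mul_right (transmission_mul_le_mul ha0 ha1.le hy hmin p) hyp
    have hρ : 0 ≤ ρ := ht.trans ((hTr p).trans hpρ)
    refine ⟨(hTr p).trans hpρ, le_trans ?_ (quadratic_le_sq ha0 ha1.le hy hmin hyp)⟩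
    have := sub_nonneg.mpr ha1.le
    gcongr
    exacts [hTr p, hT p]

lemma isTransmissionRegular_of_sq_sSup_spectrum_genDistMatrix_eq (ha0 : 0 ≤ a) (ha1 : a ≤ 1)
    (hG : G.Connected) (ht : 0 ≤ t) (hTr : ∀ u, t ≤ transmission G u)
    (hT : ∀ u, s ≤ secondTransmission G u)
    (heq : sSup (spectrum ℝ (genDistMatrix a G)) ^ 2
      = a * t * sSup (spectrum ℝ (genDistMatrix a G)) + (1 - a) * s)
    (hcard : 3 ≤ Fintype.card V) : IsTransmissionRegular G := by
  set ρ := sSup (spectrum ℝ (genDistMatrix a G))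
  obtain ⟨htρ, hquad⟩ := quadratic_le_sq_sSup_spectrum_genDistMatrix ha0 ha1 hG ht hTr hT
  rcases ha1.eq_or_lt with rfl | ha1
  · have hρt : ρ = t := by nlinarith
    exact ⟨t, fun u => le_antisymm
      ((le_sSup_spectrum (by simp [genDistMatrix_one])).trans hρt.le) (hTr u)⟩
  · obtain ⟨y, p, hyp, hmin, hy⟩ := exists_pos_eigenvector_genDistMatrix ha0 ha1 hG
    refine isTransmissionRegular_of_quadratic_eq_sq ha0 ha1 hG hy hmin hyp
      (le_antisymm (quadratic_le_sq ha0 ha1.le hy hmin hyp) ?_) hcard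
    have := sub_nonneg.mpr ha1.le
    have hρ : 0 ≤ ρ := ht.trans htρ
    rw [heq]
    gcongr
    exacts [hTr p, hT p]

end SpectralRadius

end GenDistMatrix

theorem stmt13 {V : Type*} [Fintype V] [DecidableEq V] (G : SimpleGraph V)
    (hconn : G.Connected) (n : ℕ) (hn : Fintype.card V = n) (hn2 : 2 ≤ n)
    (a : ℝ) (ha0 : 0 ≤ a) (ha1 : a ≤ 1)
    (Trmin Tmin : ℝ)
    (hTrmin : IsLeast (Set.range (transmission G)) Trmin)
    (hTmin : IsLeast (Set.range (secondTransmission G)) Tmin) :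
    (a * Trmin + Real.sqrt (a ^ 2 * Trmin ^ 2 + 4 * (1 - a) * Tmin)) / 2 ≤
      sSup (spectrum ℝ (genDistMatrix a G)) ∧
    (sSup (spectrum ℝ (genDistMatrix a G)) =
        (a * Trmin + Real.sqrt (a ^ 2 * Trmin ^ 2 + 4 * (1 - a) * Tmin)) / 2 ↔
      ∃ k, ∀ u, transmission G u = k) := by
  obtain ⟨⟨u₁, hu₁⟩, hTr⟩ := hTrmin
  obtain ⟨⟨u₂, hu₂⟩, hT⟩ := hTmin
  have ht : 0 ≤ Trmin := hu₁ ▸ transmission_nonneg G u₁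
  have hs : 0 ≤ Tmin := hu₂ ▸ secondTransmission_nonneg G u₂
  have hTr' : ∀ u, Trmin ≤ transmission G u := fun u => hTr ⟨u, rfl⟩
  have hT' : ∀ u, Tmin ≤ secondTransmission G u := fun u => hT ⟨u, rfl⟩
  set ρ := sSup (spectrum ℝ (genDistMatrix a G))
  obtain ⟨htρ, hquad⟩ := quadratic_le_sq_sSup_spectrum_genDistMatrix ha0 ha1 hconn ht hTr' hT'
  have hb : a * Trmin ≤ 2 * ρ := by nlinarith
  rw [show a ^ 2 * Trmin ^ 2 + 4 * (1 - a) * Tmin = (a * Trmin) ^ 2 + 4 * ((1 - a) * Tmin) by ring,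
    eq_comm, half_add_sqrt_eq_iff hb (by nlinarith)]
  refine ⟨half_add_sqrt_le hb (by linarith), fun heq => ?_, fun ⟨k, hk⟩ => ?_⟩
  · rcases hn2.eq_or_lt with h2 | h3
    · exact isTransmissionRegular_of_card_eq_two G (hn.trans h2.symm)
    · exact isTransmissionRegular_of_sq_sSup_spectrum_genDistMatrix_eq ha0 ha1 hconn ht hTr' hT'
        heq (hn ▸ h3)
  · have := hconn.nonempty
    rw [show ρ = k from sSup_spectrum_genDistMatrix_eq_of_transmission_eq ha0 ha1 hk,
      ← hu₁, ← hu₂, hk, secondTransmission_eq_sq hk]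
    ring
end
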